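/- arXiv:1905.07652 — 6 statements merged into one kernel-verified Lean document; each statement's English description precedes it below -/
import Mathlib

section
/- Let λ > 0 and let X = ∏_{i=1}^∞ min{∑_{k=1}^i E_k, 1} where E_1, E_2, … are i.i.d. Exp(λ). Then E[X] = e^{-λ/2} and Var(X) = e^{-2λ/3} - e^{-λ}. -/
/-!
For `f t = min(t,1)^n` put `g t = exp(-λ ∫_{min(t,1)}^1 (1 - v^n) dv)`, so that `g' = λ(1 - f)g` on
`(0, ∞)` and `g = 1` on `[1, ∞)`. Integrating `d/dx (-e^{-λx} g(s + x))` shows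
`g s = E[f(s + E₁) g(s + E₁)]` for `s ≥ 0`. With `Tₖ = E₁ + ⋯ + Eₖ`, independence then makes
`E[∏_{i<k} f(T_{i+1}) · g(T_k)]` equal to `g 0` for every `k`; almost surely some `Tₖ ≥ 1`, after
which this product no longer changes and equals `X^n`. Dominated convergence gives
`E[X^n] = g 0 = exp(-λ n/(n+1))`, and `n = 1, 2` give the mean and the variance.
-/

open MeasureTheory ProbabilityTheory Real Set Filter Topology
open scoped ENNReal

theorem hasDerivAt_comp_min_of_deriv_eq_zero {φ φ' : ℝ → ℝ} {a : ℝ}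
    (hφ : ∀ x ≤ a, HasDerivAt φ (φ' x) x) (ha : φ' a = 0) (t : ℝ) :
    HasDerivAt (fun x => φ (min x a)) (φ' (min t a)) t := by
  rcases lt_trichotomy t a with hlt | rfl | hgt
  · have hev : (fun x => φ (min x a)) =ᶠ[𝓝 t] φ := by
      filter_upwards [Iio_mem_nhds hlt] with x hx using by rw [min_eq_left hx.le]
    rw [min_eq_left hlt.le]
    exact (hφ t hlt.le).congr_of_eventuallyEq hev
  · have hleft : HasDerivWithinAt (fun x => φ (min x t)) 0 (Iic t) t := by
      refine ((ha ▸ hφ t le_rfl).hasDerivWithinAt).congr (fun x hx => ?_) (by simp)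
      rw [min_eq_left (mem_Iic.mp hx)]
    have hright : HasDerivWithinAt (fun x => φ (min x t)) 0 (Ici t) t := by
      refine (hasDerivWithinAt_const t _ (φ t)).congr (fun x hx => ?_) (by simp)
      rw [min_eq_right (mem_Ici.mp hx)]
    have := hleft.union hright
    rw [Iic_union_Ici, hasDerivWithinAt_univ] at this
    simpa [ha] using this
  · have hev : (fun x => φ (min x a)) =ᶠ[𝓝 t] fun _ => φ a := by
      filter_upwards [Ioi_mem_nhds hgt] with x hx using by rw [min_eq_right hx.le]
    rw [min_eq_right hgt.le, ha]
    exact (hasDerivAt_const t (φ a)).congr_of_eventuallyEq hev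

section Exponential

theorem integral_expMeasure {lam : ℝ} (hlam : 0 ≤ lam) (K : ℝ → ℝ) :
    ∫ x, K x ∂expMeasure lam = ∫ x in Ioi 0, lam * exp (-(lam * x)) * K x := by
  have hdens : ∀ x, (exponentialPDF lam x).toReal • K x
      = (Ici 0).indicator (fun x => lam * exp (-(lam * x)) * K x) x := by
    intro x
    by_cases hx : 0 ≤ x
    · rw [exponentialPDF_of_nonneg hx, ENNReal.toReal_ofReal (by positivity)]
      simp [hx]
    · simp [exponentialPDF_of_neg (not_le.mp hx), hx]
  rw [show expMeasure lam = volume.withDensity (exponentialPDF lam) from rfl,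
    integral_withDensity_eq_integral_toReal_smul (f := exponentialPDF lam)
      (measurable_exponentialPDFReal lam).ennreal_ofReal
      (ae_of_all _ fun _ => ENNReal.ofReal_lt_top)]
  simp_rw [hdens]
  rw [integral_indicator measurableSet_Ici, integral_Ici_eq_integral_Ioi]

theorem integral_expMeasure_comp_add_eq_of_hasDerivAt {lam : ℝ} (hlam : 0 < lam)
    {f g : ℝ → ℝ} (hg : Continuous g) (hf0 : ∀ t, 0 ≤ f t) (hg0 : ∀ t, 0 ≤ g t)
    (hg1 : ∀ t, g t ≤ 1) (hg' : ∀ t, 0 < t → HasDerivAt g (lam * (1 - f t) * g t) t)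
    {s : ℝ} (hs : 0 ≤ s) :
    ∫ x, f (s + x) * g (s + x) ∂expMeasure lam = g s := by
  set F : ℝ → ℝ := fun x => -(exp (-(lam * x)) * g (s + x))
  have hF' : ∀ x ∈ Ioi (0 : ℝ),
      HasDerivAt F (lam * exp (-(lam * x)) * (f (s + x) * g (s + x))) x := by
    intro x hx
    have hexp : HasDerivAt (fun y => exp (-(lam * y))) (exp (-(lam * x)) * -lam) x := by
      simpa using ((hasDerivAt_id x).const_mul lam).neg.exp
    have hgs := (hg' (s + x) (by linarith [mem_Ioi.mp hx])).comp_const_add s x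
    exact (hexp.mul hgs).neg.congr_deriv (by ring)
  have hF0 : Tendsto F atTop (𝓝 0) := by
    have hdecay : Tendsto (fun x => exp (-(lam * x))) atTop (𝓝 0) :=
      tendsto_exp_neg_atTop_nhds_zero.comp (tendsto_id.const_mul_atTop hlam)
    have := squeeze_zero (fun x => mul_nonneg (exp_pos _).le (hg0 _))
      (fun x => mul_le_of_le_one_right (exp_pos _).le (hg1 (s + x))) hdecay
    simpa [F] using this.neg
  rw [integral_expMeasure hlam.le,
    integral_Ioi_of_hasDerivAt_of_nonneg (by fun_prop) hF'
      (fun x _ => by have := hf0 (s + x); have := hg0 (s + x); positivity) hF0]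
  simp [F]

variable {Ω : Type*} [MeasurableSpace Ω] {P : Measure Ω} {lam : ℝ}

lemma expMeasure_Iio_zero : expMeasure lam (Iio 0) = 0 := by
  rw [show expMeasure lam = volume.withDensity (exponentialPDF lam) from rfl,
    withDensity_apply _ measurableSet_Iio]
  exact lintegral_exponentialPDF_of_nonpos le_rfl

lemma expMeasure_Iio_one_lt_one (hlam : 0 < lam) : expMeasure lam (Iio 1) < 1 := by
  have := isProbabilityMeasure_expMeasure hlam
  calc expMeasure lam (Iio 1) ≤ expMeasure lam (Iic 1) := measure_mono Iio_subset_Iic_self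
    _ = ENNReal.ofReal (1 - exp (-(lam * 1))) := by
      rw [← ofReal_cdf, cdf_expMeasure_eq hlam, if_pos zero_le_one]
    _ < 1 := by
      rw [ENNReal.ofReal_lt_one]
      linarith [exp_pos (-(lam * 1))]

lemma ae_nonneg_of_map_eq_expMeasure {Y : Ω → ℝ} (hY : Measurable Y)
    (h : P.map Y = expMeasure lam) : ∀ᵐ ω ∂P, 0 ≤ Y ω := by
  have : ∀ᵐ x ∂expMeasure lam, 0 ≤ x := by
    rw [ae_iff]
    simp_rw [not_le]
    exact expMeasure_Iio_zero
  exact ae_of_ae_map hY.aemeasurable (h ▸ this)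

end Exponential

def unitClamp (t : ℝ) : ℝ := max 0 (min t 1)

lemma unitClamp_of_nonneg {t : ℝ} (ht : 0 ≤ t) : unitClamp t = min t 1 :=
  max_eq_right (le_min ht zero_le_one)

lemma unitClamp_of_one_le {t : ℝ} (ht : 1 ≤ t) : unitClamp t = 1 := by
  rw [unitClamp_of_nonneg (zero_le_one.trans ht), min_eq_right ht]

lemma unitClamp_mem (t : ℝ) : unitClamp t ∈ Icc 0 1 :=
  ⟨le_max_left _ _, max_le zero_le_one (min_le_right _ _)⟩

@[fun_prop]
lemma continuous_unitClamp : Continuous unitClamp := by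
  unfold unitClamp; fun_prop

/-- `∫_u^1 (1 - v^n) dv`. -/
noncomputable def momentExponent (n : ℕ) (u : ℝ) : ℝ := (1 - u) - (1 - u ^ (n + 1)) / (n + 1)

lemma hasDerivAt_momentExponent (n : ℕ) (u : ℝ) :
    HasDerivAt (momentExponent n) (u ^ n - 1) u := by
  refine (((hasDerivAt_id u).const_sub 1).fun_sub
    (((hasDerivAt_pow (n + 1) u).const_sub 1).div_const ((n : ℝ) + 1))).congr_deriv ?_
  field_simp
  push_cast
  ring

lemma momentExponent_nonneg (n : ℕ) {u : ℝ} (hu : u ∈ Icc (0 : ℝ) 1) :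
    0 ≤ momentExponent n u := by
  have h := one_add_mul_le_pow (a := u - 1) (by linarith [hu.1]) (n + 1)
  have hn : (0 : ℝ) < n + 1 := by positivity
  rw [add_sub_cancel] at h
  push_cast at h
  rw [momentExponent, sub_nonneg, div_le_iff₀ hn]
  linarith

lemma momentExponent_zero (n : ℕ) : momentExponent n 0 = n / (n + 1) := by
  rw [momentExponent]
  field_simp
  ring

lemma momentExponent_one (n : ℕ) : momentExponent n 1 = 0 := by
  simp [momentExponent]

/-- Solution of `g' = λ (1 - t^n) g` on `[0, 1]` with `g 1 = 1`, extended by constants. -/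
noncomputable def momentProfile (lam : ℝ) (n : ℕ) (t : ℝ) : ℝ :=
  exp (-(lam * momentExponent n (unitClamp t)))

section momentProfile

variable {lam : ℝ} {n : ℕ}

lemma continuous_momentProfile : Continuous (momentProfile lam n) := by
  unfold momentProfile momentExponent
  fun_prop

lemma momentProfile_pos {t : ℝ} : 0 < momentProfile lam n t := exp_pos _

lemma momentProfile_le_one (hlam : 0 ≤ lam) (t : ℝ) : momentProfile lam n t ≤ 1 := by
  rw [momentProfile, exp_le_one_iff, neg_nonpos]
  exact mul_nonneg hlam (momentExponent_nonneg n (unitClamp_mem t))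

lemma momentProfile_of_one_le {t : ℝ} (ht : 1 ≤ t) : momentProfile lam n t = 1 := by
  simp [momentProfile, unitClamp_of_one_le ht, momentExponent_one]

lemma momentProfile_zero : momentProfile lam n 0 = exp (-(lam * n / (n + 1))) := by
  rw [momentProfile, unitClamp_of_nonneg le_rfl, min_eq_left zero_le_one, momentExponent_zero,
    mul_div_assoc]

lemma hasDerivAt_momentProfile {t : ℝ} (ht : 0 < t) :
    HasDerivAt (momentProfile lam n) (lam * (1 - unitClamp t ^ n) * momentProfile lam n t) t := by
  set φ : ℝ → ℝ := fun u => exp (-(lam * momentExponent n u))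
  have hφ : ∀ u, HasDerivAt φ (lam * (1 - u ^ n) * φ u) u := fun u =>
    ((hasDerivAt_momentExponent n u).const_mul lam).fun_neg.exp.congr_deriv (by ring)
  have hmin := hasDerivAt_comp_min_of_deriv_eq_zero (a := 1) (fun u _ => hφ u) (by simp) t
  have hev : (fun x => φ (min x 1)) =ᶠ[𝓝 t] momentProfile lam n := by
    filter_upwards [Ioi_mem_nhds ht] with x hx
    rw [momentProfile, unitClamp_of_nonneg (le_of_lt hx)]
  rw [unitClamp_of_nonneg ht.le, show momentProfile lam n t = φ (min t 1) from hev.eq_of_nhds.symm]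
  exact hmin.congr_of_eventuallyEq hev.symm

end momentProfile

lemma abs_unitClamp_pow_le_one (n : ℕ) (t : ℝ) : |unitClamp t ^ n| ≤ 1 := by
  rw [abs_of_nonneg (pow_nonneg (unitClamp_mem t).1 n)]
  exact pow_le_one₀ (unitClamp_mem t).1 (unitClamp_mem t).2

lemma abs_momentProfile_le_one {lam : ℝ} (hlam : 0 ≤ lam) (n : ℕ) (t : ℝ) :
    |momentProfile lam n t| ≤ 1 := by
  rw [abs_of_pos momentProfile_pos]
  exact momentProfile_le_one hlam t

lemma integral_expMeasure_unitClamp_pow_mul_momentProfile {lam : ℝ} (hlam : 0 < lam) (n : ℕ)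
    {s : ℝ} (hs : 0 ≤ s) :
    ∫ x, unitClamp (s + x) ^ n * momentProfile lam n (s + x) ∂expMeasure lam
      = momentProfile lam n s :=
  integral_expMeasure_comp_add_eq_of_hasDerivAt hlam continuous_momentProfile
    (fun t => pow_nonneg (unitClamp_mem t).1 n) (fun _ => momentProfile_pos.le)
    (momentProfile_le_one hlam.le) (fun _ ht => hasDerivAt_momentProfile ht) hs

namespace ProbabilityTheory

variable {Ω : Type*} [MeasurableSpace Ω] {P : Measure Ω}

theorem IndepFun.integral_comp_prodMk {α β : Type*} [MeasurableSpace α] [MeasurableSpace β]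
    [IsFiniteMeasure P] {Y : Ω → α} {Z : Ω → β} (hYZ : IndepFun Y Z P) (hY : Measurable Y)
    (hZ : Measurable Z) {H : α × β → ℝ} (hH : Measurable H)
    (hint : Integrable (fun ω => H (Y ω, Z ω)) P) :
    ∫ ω, H (Y ω, Z ω) ∂P = ∫ ω, ∫ z, H (Y ω, z) ∂(P.map Z) ∂P := by
  have hmap : P.map (fun ω => (Y ω, Z ω)) = (P.map Y).prod (P.map Z) :=
    (indepFun_iff_map_prod_eq_prod_map_map hY.aemeasurable hZ.aemeasurable).mp hYZ
  have hYZm : Measurable fun ω => (Y ω, Z ω) := hY.prodMk hZ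
  have hintH : Integrable H ((P.map Y).prod (P.map Z)) :=
    hmap ▸ (integrable_map_measure hH.aestronglyMeasurable hYZm.aemeasurable).mpr hint
  calc ∫ ω, H (Y ω, Z ω) ∂P = ∫ p, H p ∂(P.map fun ω => (Y ω, Z ω)) :=
        (integral_map hYZm.aemeasurable hH.aestronglyMeasurable).symm
    _ = ∫ y, ∫ z, H (y, z) ∂(P.map Z) ∂(P.map Y) := by rw [hmap, integral_prod H hintH]
    _ = ∫ ω, ∫ z, H (Y ω, z) ∂(P.map Z) ∂P :=
        integral_map hY.aemeasurable hintH.integral_prod_left.aestronglyMeasurable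

theorem iIndepFun.indepFun_of_measurable_iSup_lt {β γ : Type*} [mβ : MeasurableSpace β]
    [MeasurableSpace γ] {E : ℕ → Ω → β} (hmeas : ∀ i, Measurable (E i)) (hind : iIndepFun E P)
    {n : ℕ} {Y : Ω → γ} (hY : Measurable[⨆ i ∈ Iio n, mβ.comap (E i)] Y) :
    IndepFun Y (E n) P := by
  have hpast := indep_iSup_of_disjoint (fun i => (hmeas i).comap_le) hind.iIndep
    (S := Iio n) (T := {n}) (by simp)
  rw [IndepFun_iff_Indep]
  exact indep_of_indep_of_le hpast hY.comap_le (le_iSup₂_of_le n rfl le_rfl)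

theorem iIndepFun.ae_exists_notMem {β : Type*} [MeasurableSpace β] {E : ℕ → Ω → β}
    (hind : iIndepFun E P) {s : Set β} (hs : MeasurableSet s) {c : ℝ≥0∞} (hc : c < 1) (hle : ∀ i, P (E i ⁻¹' s) ≤ c) :
    ∀ᵐ ω ∂P, ∃ i, E i ω ∉ s := by
  rw [ae_iff]
  push Not
  refine le_antisymm (ge_of_tendsto' (ENNReal.tendsto_pow_atTop_nhds_zero_of_lt_one hc)
    fun m => ?_) bot_le
  calc P {ω | ∀ i, E i ω ∈ s} ≤ P (⋂ i ∈ Finset.range m, E i ⁻¹' s) :=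
        measure_mono fun ω hω => by simp_all
    _ = ∏ i ∈ Finset.range m, P (E i ⁻¹' s) := hind.meas_biInter fun i _ => ⟨s, hs, rfl⟩
    _ ≤ c ^ m := by
      simpa using Finset.prod_le_pow_card (Finset.range m) _ c fun i _ => hle i

end ProbabilityTheory

section PartialSum

variable {Ω : Type*}

def partialSum (E : ℕ → Ω → ℝ) (n : ℕ) (ω : Ω) : ℝ := ∑ k ∈ Finset.range n, E k ω

variable {E : ℕ → Ω → ℝ}

lemma partialSum_succ (n : ℕ) (ω : Ω) :
    partialSum E (n + 1) ω = partialSum E n ω + E n ω :=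
  Finset.sum_range_succ _ n

lemma measurable_partialSum {m : MeasurableSpace Ω} {n : ℕ}
    (hmeas : ∀ k < n, Measurable[m] (E k)) : Measurable[m] (partialSum E n) :=
  Finset.measurable_sum _ fun k hk => hmeas k (Finset.mem_range.mp hk)

lemma partialSum_nonneg {ω : Ω} (hnn : ∀ i, 0 ≤ E i ω) (n : ℕ) : 0 ≤ partialSum E n ω :=
  Finset.sum_nonneg fun k _ => hnn k

lemma monotone_partialSum {ω : Ω} (hnn : ∀ i, 0 ≤ E i ω) : Monotone fun n => partialSum E n ω :=
  monotone_nat_of_le_succ fun n => by simp [partialSum_succ, hnn n]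

end PartialSum

lemma prod_mul_eq_tprod_of_one_le {f g : ℝ → ℝ} (hf : ∀ t, 1 ≤ t → f t = 1)
    (hg : ∀ t, 1 ≤ t → g t = 1) {T : ℕ → ℝ} (hT : Monotone T) {N n : ℕ} (hN : 1 ≤ T N)
    (hn : N ≤ n) : (∏ i ∈ Finset.range n, f (T (i + 1))) * g (T n) = ∏' i, f (T (i + 1)) := by
  rw [hg _ (hN.trans (hT hn)), mul_one]
  exact (tprod_eq_prod fun i hi => hf _ (hN.trans (hT (by simp at hi; omega)))).symm

lemma tprod_min_one_pow_eq {T : ℕ → ℝ} (hT : Monotone T) (hT0 : ∀ k, 0 ≤ T k) {N : ℕ}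
    (hN : 1 ≤ T N) (n : ℕ) :
    (∏' i, min (T (i + 1)) 1) ^ n = ∏' i, unitClamp (T (i + 1)) ^ n := by
  rw [← prod_mul_eq_tprod_of_one_le (fun t ht => min_eq_right ht) (g := fun _ => 1)
      (fun _ _ => rfl) hT hN le_rfl,
    ← prod_mul_eq_tprod_of_one_le (f := fun t => unitClamp t ^ n)
      (fun t ht => by rw [unitClamp_of_one_le ht, one_pow]) (g := fun _ => 1) (fun _ _ => rfl)
      hT hN le_rfl]
  simp [← Finset.prod_pow, unitClamp_of_nonneg (hT0 _)]

section Renewal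

variable {Ω : Type*} [MeasurableSpace Ω] {P : Measure Ω} [IsProbabilityMeasure P]
  {E : ℕ → Ω → ℝ} {μ : Measure ℝ} {f g : ℝ → ℝ}

lemma abs_prod_mul_le_one (hf1 : ∀ t, |f t| ≤ 1) (hg1 : ∀ t, |g t| ≤ 1) (s : Finset ℕ)
    (a : ℕ → ℝ) (b : ℝ) : |(∏ i ∈ s, f (a i)) * g b| ≤ 1 := by
  rw [abs_mul, Finset.abs_prod]
  exact mul_le_one₀ (Finset.prod_le_one (fun _ _ => abs_nonneg _) fun i _ => hf1 _)
    (abs_nonneg _) (hg1 b)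

theorem integral_prod_mul_succ_eq (hmeas : ∀ i, Measurable (E i)) (hind : iIndepFun E P)
    (hdist : ∀ i, P.map (E i) = μ) (hnn : ∀ᵐ ω ∂P, ∀ i, 0 ≤ E i ω) (hf : Measurable f)
    (hg : Measurable g) (hf1 : ∀ t, |f t| ≤ 1) (hg1 : ∀ t, |g t| ≤ 1)
    (hharm : ∀ s, 0 ≤ s → ∫ x, f (s + x) * g (s + x) ∂μ = g s) (n : ℕ) :
    ∫ ω, (∏ i ∈ Finset.range (n + 1), f (partialSum E (i + 1) ω)) * g (partialSum E (n + 1) ω) ∂P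
      = ∫ ω, (∏ i ∈ Finset.range n, f (partialSum E (i + 1) ω)) * g (partialSum E n ω) ∂P := by
  set A : Ω → ℝ := fun ω => ∏ i ∈ Finset.range n, f (partialSum E (i + 1) ω)
  set Y : Ω → ℝ × ℝ := fun ω => (A ω, partialSum E n ω)
  set H : (ℝ × ℝ) × ℝ → ℝ := fun p => p.1.1 * (f (p.1.2 + p.2) * g (p.1.2 + p.2))
  have hpast : ∀ k < n,
      Measurable[⨆ i ∈ Iio n, (inferInstance : MeasurableSpace ℝ).comap (E i)] (E k) :=
    fun k hk => Measurable.of_comap_le (le_iSup₂_of_le k hk le_rfl)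
  have hY : Measurable[⨆ i ∈ Iio n, (inferInstance : MeasurableSpace ℝ).comap (E i)] Y :=
    (Finset.measurable_prod _ fun i hi => hf.comp (measurable_partialSum fun k hk =>
      hpast k (by simp at hi; omega))).prodMk (measurable_partialSum hpast)
  have hYm : Measurable Y := hY.mono (iSup₂_le fun i _ => (hmeas i).comap_le) le_rfl
  have hHm : Measurable H := by fun_prop
  have hstep : ∀ ω, (∏ i ∈ Finset.range (n + 1), f (partialSum E (i + 1) ω))
      * g (partialSum E (n + 1) ω) = H (Y ω, E n ω) := fun ω => by
    simp only [H, Y, A, Finset.prod_range_succ, partialSum_succ]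
    ring
  have hint : Integrable (fun ω => H (Y ω, E n ω)) P :=
    Integrable.of_bound (hHm.comp (hYm.prodMk (hmeas n))).aestronglyMeasurable 1
      (ae_of_all _ fun ω => (hstep ω) ▸ abs_prod_mul_le_one hf1 hg1 _ _ _)
  simp_rw [hstep]
  rw [(hind.indepFun_of_measurable_iSup_lt hmeas hY).integral_comp_prodMk hYm (hmeas n) hHm hint,
    hdist n]
  refine integral_congr_ae ?_
  filter_upwards [hnn] with ω hω
  simp only [H, Y]
  rw [integral_const_mul, hharm _ (partialSum_nonneg hω n)]

theorem integral_prod_mul_eq_of_harmonic (hmeas : ∀ i, Measurable (E i)) (hind : iIndepFun E P)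
    (hdist : ∀ i, P.map (E i) = μ) (hnn : ∀ᵐ ω ∂P, ∀ i, 0 ≤ E i ω) (hf : Measurable f)
    (hg : Measurable g) (hf1 : ∀ t, |f t| ≤ 1) (hg1 : ∀ t, |g t| ≤ 1)
    (hharm : ∀ s, 0 ≤ s → ∫ x, f (s + x) * g (s + x) ∂μ = g s) (n : ℕ) :
    ∫ ω, (∏ i ∈ Finset.range n, f (partialSum E (i + 1) ω)) * g (partialSum E n ω) ∂P = g 0 := by
  induction n with
  | zero => simp [partialSum]
  | succ n ih =>
    rwa [integral_prod_mul_succ_eq hmeas hind hdist hnn hf hg hf1 hg1 hharm]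

theorem integral_tprod_eq_of_harmonic (hmeas : ∀ i, Measurable (E i)) (hind : iIndepFun E P)
    (hdist : ∀ i, P.map (E i) = μ) (hnn : ∀ᵐ ω ∂P, ∀ i, 0 ≤ E i ω)
    (hcross : ∀ᵐ ω ∂P, ∃ N, 1 ≤ partialSum E N ω) (hf : Measurable f)
    (hg : Measurable g) (hf1 : ∀ t, |f t| ≤ 1) (hg1 : ∀ t, |g t| ≤ 1)
    (hf_one : ∀ t, 1 ≤ t → f t = 1) (hg_one : ∀ t, 1 ≤ t → g t = 1)
    (hharm : ∀ s, 0 ≤ s → ∫ x, f (s + x) * g (s + x) ∂μ = g s) :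
    ∫ ω, ∏' i, f (partialSum E (i + 1) ω) ∂P = g 0 := by
  have hTm : ∀ n, Measurable (partialSum E n) := fun n => measurable_partialSum fun k _ => hmeas k
  have hlim : ∀ᵐ ω ∂P, Tendsto (fun n => (∏ i ∈ Finset.range n, f (partialSum E (i + 1) ω))
      * g (partialSum E n ω)) atTop (𝓝 (∏' i, f (partialSum E (i + 1) ω))) := by
    filter_upwards [hnn, hcross] with ω hω ⟨N, hN⟩
    refine tendsto_const_nhds.congr' ?_
    filter_upwards [eventually_ge_atTop N] with n hn
    exact (prod_mul_eq_tprod_of_one_le hf_one hg_one (monotone_partialSum hω) hN hn).symm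
  refine tendsto_nhds_unique (tendsto_integral_of_dominated_convergence (fun _ => 1)
    (fun n => ?_) (integrable_const 1) (fun n => ae_of_all _ fun ω => ?_) hlim) ?_
  · exact ((Finset.measurable_prod _ fun i _ => hf.comp (hTm _)).mul
      (hg.comp (hTm n))).aestronglyMeasurable
  · exact abs_prod_mul_le_one hf1 hg1 _ _ _
  · simp_rw [integral_prod_mul_eq_of_harmonic hmeas hind hdist hnn hf hg hf1 hg1 hharm]
    exact tendsto_const_nhds

end Renewal

section IidExponential

variable {Ω : Type*} [MeasurableSpace Ω] {P : Measure Ω} {lam : ℝ} {E : ℕ → Ω → ℝ}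

lemma ae_exists_one_le_partialSum (hlam : 0 < lam) (hmeas : ∀ i, Measurable (E i))
    (hind : iIndepFun E P) (hdist : ∀ i, P.map (E i) = expMeasure lam) :
    ∀ᵐ ω ∂P, ∃ N, 1 ≤ partialSum E N ω := by
  have hbig : ∀ᵐ ω ∂P, ∃ i, E i ω ∉ Iio 1 :=
    hind.ae_exists_notMem measurableSet_Iio (expMeasure_Iio_one_lt_one hlam) fun i => by
      rw [← Measure.map_apply (hmeas i) measurableSet_Iio, hdist i]
  filter_upwards [hbig, ae_all_iff.2 fun i => ae_nonneg_of_map_eq_expMeasure (hmeas i) (hdist i)]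
    with ω ⟨i, hi⟩ hω
  rw [mem_Iio, not_lt] at hi
  exact ⟨i + 1, by rw [partialSum_succ]; linarith [partialSum_nonneg hω i]⟩

theorem integral_tprod_min_partialSum_pow [IsProbabilityMeasure P] (hlam : 0 < lam)
    (hmeas : ∀ i, Measurable (E i)) (hind : iIndepFun E P)
    (hdist : ∀ i, P.map (E i) = expMeasure lam) (n : ℕ) :
    ∫ ω, (∏' i, min (partialSum E (i + 1) ω) 1) ^ n ∂P = exp (-(lam * n / (n + 1))) := by
  have hnn : ∀ᵐ ω ∂P, ∀ i, 0 ≤ E i ω :=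
    ae_all_iff.2 fun i => ae_nonneg_of_map_eq_expMeasure (hmeas i) (hdist i)
  have hcross := ae_exists_one_le_partialSum hlam hmeas hind hdist
  have hclamp : ∀ᵐ ω ∂P, (∏' i, min (partialSum E (i + 1) ω) 1) ^ n
      = ∏' i, unitClamp (partialSum E (i + 1) ω) ^ n := by
    filter_upwards [hnn, hcross] with ω hω ⟨N, hN⟩
    exact tprod_min_one_pow_eq (monotone_partialSum hω) (partialSum_nonneg hω) hN n
  rw [integral_congr_ae hclamp, ← momentProfile_zero]
  exact integral_tprod_eq_of_harmonic (f := fun t => unitClamp t ^ n) hmeas hind hdist hnn hcross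
    (continuous_unitClamp.pow n).measurable continuous_momentProfile.measurable
    (abs_unitClamp_pow_le_one n) (abs_momentProfile_le_one hlam.le n)
    (fun t ht => by rw [unitClamp_of_one_le ht, one_pow]) (fun _ ht => momentProfile_of_one_le ht)
    fun _ hs => integral_expMeasure_unitClamp_pow_mul_momentProfile hlam n hs

end IidExponential

/-- For `X = ∏_{i=1}^∞ min{∑_{k=1}^i E_k, 1}` with `E_i` i.i.d. `Exp(λ)`:
`E[X] = e^{-λ/2}` and `Var(X) = E[X²] - (E[X])² = e^{-2λ/3} - e^{-λ}`. -/
theorem stmt_2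
    {Ω : Type*} [MeasurableSpace Ω] (P : Measure Ω) [IsProbabilityMeasure P]
    (lam : ℝ) (hlam : 0 < lam)
    (E : ℕ → Ω → ℝ) (hEmeas : ∀ i, Measurable (E i))
    (hEindep : iIndepFun E P)
    (hEdist : ∀ i, P.map (E i) = expMeasure lam)
    (X : Ω → ℝ)
    (hX : ∀ ω, X ω = ∏' i : ℕ, min (∑ k ∈ Finset.range (i + 1), E k ω) 1) :
    (∫ ω, X ω ∂P = Real.exp (-lam / 2)) ∧
    (∫ ω, (X ω) ^ 2 ∂P) - (∫ ω, X ω ∂P) ^ 2 =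
      Real.exp (-(2 * lam) / 3) - Real.exp (-lam) := by
  obtain rfl : X = fun ω => ∏' i, min (partialSum E (i + 1) ω) 1 := funext hX
  have hmoment := integral_tprod_min_partialSum_pow hlam hEmeas hEindep hEdist
  have hmean : ∫ ω, ∏' i, min (partialSum E (i + 1) ω) 1 ∂P = exp (-lam / 2) := by
    simpa [show -(lam / (1 + 1)) = -lam / 2 by ring] using hmoment 1
  refine ⟨hmean, ?_⟩
  rw [hmoment 2, hmean, ← exp_nat_mul]
  push_cast
  ring_nf
end

section
/- Let λ > 0 and let X = ∏_{i=1}^∞ min{∑_{k=1}^i E_k, 1} where E_1, E_2, … are i.i.d. Exp(λ). Then for every t ∈ (0,1), P(X ≤ t) ≤ exp(-((√(-log t) - √λ)_+)²), where x_+ = max{x, 0}. -/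
/-!
Write `S_i = E_1 + ⋯ + E_i` and fix `0 ≤ s < 1`. The function `ψ = gauge λ s` satisfies
`E[min(x + E, 1)^(-s) ψ(x + E)] = ψ(x)` for `x ≥ 0` and `E ~ Exp(λ)`, so
`ψ(S_n) ∏_{i ≤ n} min(S_i, 1)^(-s)` is a martingale. As `ψ ≥ 1`, this bounds
`E[∏_{i ≤ n} min(S_i, 1)^(-s)]` by `ψ(0) = exp(λ s / (1 - s))`, and Fatou's lemma bounds
`E[X^(-s)]` by the same constant. Markov's inequality then gives
`P(X ≤ t) ≤ t^s exp(λ s / (1 - s))`, and `s = 1 - √(λ / (-log t))` optimizes the exponent to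
`-(√(-log t) - √λ)²`.
-/

open MeasureTheory ProbabilityTheory Set Filter Topology
open scoped ENNReal Real

theorem Real.multipliable_of_nonneg_of_le_one {ι : Type*} {f : ι → ℝ} (h0 : ∀ i, 0 ≤ f i)
    (h1 : ∀ i, f i ≤ 1) : Multipliable f :=
  ⟨_, tendsto_atTop_ciInf
    (fun _ _ hst => Finset.prod_le_prod_of_subset_of_le_one hst (fun i _ => h0 i)
      (fun i _ _ => h1 i))
    ⟨0, by rintro _ ⟨s, rfl⟩; exact Finset.prod_nonneg fun i _ => h0 i⟩⟩

theorem MeasureTheory.lintegral_pi_fin_succ_le {α : Type*} [MeasurableSpace α] (μ : Measure α)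
    [SigmaFinite μ] {n : ℕ} (F : (Fin (n + 1) → α) → ℝ≥0∞) :
    ∫⁻ y, F y ∂Measure.pi (fun _ => μ) ≤
      ∫⁻ u, ∫⁻ z, F (Fin.cons u z) ∂Measure.pi (fun _ => μ) ∂μ := by
  rw [← ((measurePreserving_piFinSuccAbove (fun _ => μ) 0).symm).lintegral_comp_emb
    (MeasurableEquiv.measurableEmbedding _)]
  refine (lintegral_prod_le _).trans_eq ?_
  simp [MeasurableEquiv.piFinSuccAbove_symm_apply, Fin.insertNthEquiv, Fin.insertNth_zero']

theorem MeasureTheory.measure_le_le_ofReal_rpow_mul_lintegral {α : Type*} [MeasurableSpace α]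
    {μ : Measure α} {Z : α → ℝ} (hZ : AEMeasurable Z μ) {s t : ℝ} (hs : 0 ≤ s) (ht : 0 < t) :
    μ {a | Z a ≤ t} ≤ ENNReal.ofReal (t ^ s) * ∫⁻ a, ENNReal.ofReal (Z a) ^ (-s) ∂μ := by
  have ht' : ENNReal.ofReal t ≠ 0 := by simpa using ht
  calc μ {a | Z a ≤ t} ≤ μ {a | ENNReal.ofReal t ^ (-s) ≤ ENNReal.ofReal (Z a) ^ (-s)} := by
        refine measure_mono fun a ha => ?_
        simp only [mem_ofPred_eq, ENNReal.rpow_neg]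
        exact ENNReal.inv_le_inv.2 (ENNReal.rpow_le_rpow (ENNReal.ofReal_le_ofReal ha) hs)
    _ ≤ (∫⁻ a, ENNReal.ofReal (Z a) ^ (-s) ∂μ) / ENNReal.ofReal t ^ (-s) :=
        meas_ge_le_lintegral_div (by fun_prop) (by simp [ENNReal.rpow_neg, ht'])
          (by simp [ENNReal.rpow_neg, ht'])
    _ = ENNReal.ofReal (t ^ s) * ∫⁻ a, ENNReal.ofReal (Z a) ^ (-s) ∂μ := by
        rw [ENNReal.rpow_neg, div_eq_mul_inv, inv_inv, mul_comm, ENNReal.ofReal_rpow_of_pos ht]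

theorem ProbabilityTheory.iIndepFun.map_fin_eq_pi {Ω β : Type*} [MeasurableSpace Ω]
    [MeasurableSpace β] {P : Measure Ω} {X : ℕ → Ω → β} (hX : ∀ i, Measurable (X i))
    (hind : iIndepFun X P) {μ : Measure β} (hlaw : ∀ i, P.map (X i) = μ) (n : ℕ) :
    P.map (fun ω (i : Fin n) => X i ω) = Measure.pi (fun _ => μ) := by
  have hind_n : iIndepFun (fun (i : Fin n) => X i) P := hind.precomp Fin.val_injective
  rw [hind_n.map_fun_eq_pi_map fun i : Fin n => (hX i).aemeasurable]
  simp [hlaw]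

theorem ProbabilityTheory.ae_nonneg_expMeasure (r : ℝ) : ∀ᵐ u ∂expMeasure r, 0 ≤ u := by
  simp only [ae_iff, not_le]
  change volume.withDensity (exponentialPDF r) (Iio 0) = 0
  rw [withDensity_apply _ measurableSet_Iio]
  exact lintegral_exponentialPDF_of_nonpos le_rfl

theorem ProbabilityTheory.lintegral_expMeasure {r : ℝ} {f : ℝ → ℝ≥0∞} (hf : Measurable f) :
    ∫⁻ u, f u ∂expMeasure r =
      ∫⁻ u in Ioi 0, ENNReal.ofReal (r * Real.exp (-(r * u))) * f u := by
  have hpdf : Measurable (exponentialPDF r) := (measurable_exponentialPDFReal r).ennreal_ofReal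
  rw [show expMeasure r = volume.withDensity (exponentialPDF r) from rfl,
    lintegral_withDensity_eq_lintegral_mul _ hpdf hf, Measure.restrict_congr_set Ioi_ae_eq_Ici,
    ← setLIntegral_eq_of_support_subset (s := Ici 0)]
  · refine setLIntegral_congr_fun measurableSet_Ici fun u hu => ?_
    simp only [Pi.mul_apply, exponentialPDF_of_nonneg hu]
  · intro u hu
    by_contra hneg
    exact hu (by simp [exponentialPDF_of_neg (not_le.1 hneg)])

namespace PartialSumProduct

noncomputable def prodPartialSums (g : ℝ → ℝ≥0∞) : (n : ℕ) → ℝ → (Fin n → ℝ) → ℝ≥0∞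
  | 0, _, _ => 1
  | n + 1, x, y => g (x + y 0) * prodPartialSums g n (x + y 0) (Fin.tail y)

variable {g h : ℝ → ℝ≥0∞}

lemma measurable_prodPartialSums (hg : Measurable g) :
    ∀ n, Measurable (Function.uncurry (prodPartialSums g n))
  | 0 => measurable_const
  | n + 1 => by
    have hhead : Measurable fun p : ℝ × (Fin (n + 1) → ℝ) => p.1 + p.2 0 := by fun_prop
    have htail : Measurable fun p : ℝ × (Fin (n + 1) → ℝ) => Fin.tail p.2 :=
      measurable_pi_lambda _ fun i => (measurable_pi_apply i.succ).comp measurable_snd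
    exact (hg.comp hhead).mul ((measurable_prodPartialSums hg n).comp (hhead.prodMk htail))

lemma prodPartialSums_apply (n : ℕ) (x : ℝ) (z : ℕ → ℝ) :
    prodPartialSums g n x (fun i : Fin n => z i) =
      ∏ i ∈ Finset.range n, g (x + ∑ k ∈ Finset.range (i + 1), z k) := by
  induction n generalizing x z with
  | zero => rfl
  | succ n ih =>
    calc prodPartialSums g (n + 1) x (fun i => z i)
        = g (x + z 0) * prodPartialSums g n (x + z 0) (fun i : Fin n => z (i + 1)) := rfl
      _ = _ := by
        rw [ih (x + z 0) fun k => z (k + 1), Finset.prod_range_succ' _ n, mul_comm]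
        simp only [Finset.sum_range_succ' _ (_ + 1), ← add_assoc, add_right_comm x, zero_add,
          Finset.sum_range_one]

theorem lintegral_prodPartialSums_le {μ : Measure ℝ} [SigmaFinite μ] (hμ : ∀ᵐ u ∂μ, 0 ≤ u)
    (hg : Measurable g) (h_one : ∀ x, 0 ≤ x → 1 ≤ h x)
    (h_harm : ∀ x, 0 ≤ x → ∫⁻ u, g (x + u) * h (x + u) ∂μ ≤ h x) (n : ℕ) {x : ℝ} (hx : 0 ≤ x) :
    ∫⁻ y, prodPartialSums g n x y ∂Measure.pi (fun _ => μ) ≤ h x := by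
  induction n generalizing x with
  | zero => simpa [prodPartialSums] using h_one x hx
  | succ n ih =>
    calc ∫⁻ y, prodPartialSums g (n + 1) x y ∂Measure.pi (fun _ => μ)
        ≤ ∫⁻ u, ∫⁻ z, g (x + u) * prodPartialSums g n (x + u) z
            ∂Measure.pi (fun _ => μ) ∂μ := by
          simpa [prodPartialSums] using lintegral_pi_fin_succ_le μ (prodPartialSums g (n + 1) x)
      _ = ∫⁻ u, g (x + u) * ∫⁻ z, prodPartialSums g n (x + u) z
            ∂Measure.pi (fun _ => μ) ∂μ :=
          lintegral_congr fun u => lintegral_const_mul _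
            ((measurable_prodPartialSums hg n).comp measurable_prodMk_left)
      _ ≤ ∫⁻ u, g (x + u) * h (x + u) ∂μ := by
          refine lintegral_mono_ae ?_
          filter_upwards [hμ] with u hu
          gcongr
          exact ih (by linarith)
      _ ≤ h x := h_harm x hx

theorem lintegral_prod_partialSum_le_of_iid {Ω : Type*} [MeasurableSpace Ω] {P : Measure Ω}
    {E : ℕ → Ω → ℝ} (hE : ∀ i, Measurable (E i)) (hind : iIndepFun E P)
    {μ : Measure ℝ} [SigmaFinite μ] (hlaw : ∀ i, P.map (E i) = μ) (hμ : ∀ᵐ u ∂μ, 0 ≤ u)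
    (hg : Measurable g) (h_one : ∀ x, 0 ≤ x → 1 ≤ h x)
    (h_harm : ∀ x, 0 ≤ x → ∫⁻ u, g (x + u) * h (x + u) ∂μ ≤ h x) (n : ℕ) :
    ∫⁻ ω, ∏ i ∈ Finset.range n, g (∑ k ∈ Finset.range (i + 1), E k ω) ∂P ≤ h 0 := by
  have hmeas : Measurable fun ω (i : Fin n) => E i ω := measurable_pi_lambda _ fun i => hE i
  calc ∫⁻ ω, ∏ i ∈ Finset.range n, g (∑ k ∈ Finset.range (i + 1), E k ω) ∂P
      = ∫⁻ ω, prodPartialSums g n 0 (fun i : Fin n => E i ω) ∂P :=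
        lintegral_congr fun ω => by simpa using (prodPartialSums_apply n 0 fun k => E k ω).symm
    _ = ∫⁻ y, prodPartialSums g n 0 y ∂Measure.pi (fun _ => μ) := by
        rw [← hind.map_fin_eq_pi hE hlaw n]
        exact (lintegral_map ((measurable_prodPartialSums hg n).comp measurable_prodMk_left)
          hmeas).symm
    _ ≤ h 0 := lintegral_prodPartialSums_le hμ hg h_one h_harm n le_rfl

noncomputable def potential (s y : ℝ) : ℝ := (1 - y ^ (1 - s)) / (1 - s) - (1 - y)

/-- `ψ = gauge λ s` solves `ψ' = λ (1 - v^(-s)) ψ` on `(0, 1)` and equals `1` on `[1, ∞)`; this is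
exactly what makes `u ↦ -e^(-λu) ψ(x + u)` an antiderivative of
`λ e^(-λu) min(x + u, 1)^(-s) ψ(x + u)`. -/
noncomputable def gauge (lam s v : ℝ) : ℝ := Real.exp (lam * potential s (min v 1))

variable {lam s : ℝ}

lemma potential_nonneg (hs0 : 0 ≤ s) (hs1 : s < 1) {y : ℝ} (hy : 0 ≤ y) :
    0 ≤ potential s y := by
  have bernoulli : y ^ (1 - s) ≤ 1 + (1 - s) * (y - 1) := by
    simpa using rpow_one_add_le_one_add_mul_self (by linarith : (-1 : ℝ) ≤ y - 1)
      (by linarith : 0 ≤ 1 - s) (by linarith : 1 - s ≤ 1)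
  rw [potential, sub_nonneg, le_div_iff₀ (by linarith)]
  nlinarith

lemma hasDerivAt_potential (hs1 : s ≠ 1) {y : ℝ} (hy : 0 < y) :
    HasDerivAt (potential s) (1 - y ^ (-s)) y := by
  have hpow := Real.hasDerivAt_rpow_const (x := y) (p := 1 - s) (Or.inl hy.ne')
  refine HasDerivAt.congr_deriv (f := potential s)
    (((hpow.const_sub 1).div_const (1 - s)).sub ((hasDerivAt_id y).const_sub 1)) ?_
  rw [show 1 - s - 1 = -s by ring]
  field_simp [sub_ne_zero.2 hs1.symm]
  ring

lemma hasDerivAt_potential_min (hs1 : s ≠ 1) {v : ℝ} (hv : 0 < v) :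
    HasDerivAt (fun w => potential s (min w 1)) (1 - min v 1 ^ (-s)) v := by
  rcases lt_trichotomy v 1 with hlt | rfl | hgt
  · rw [min_eq_left hlt.le]
    refine (hasDerivAt_potential hs1 hv).congr_of_eventuallyEq ?_
    filter_upwards [Iio_mem_nhds hlt] with w hw
    rw [min_eq_left (le_of_lt hw)]
  · have hleft : HasDerivWithinAt (fun w => potential s (min w 1)) 0 (Iic 1) 1 := by
      have := (hasDerivAt_potential hs1 one_pos).hasDerivWithinAt (s := Iic 1)
      rw [Real.one_rpow, sub_self] at this
      exact this.congr (fun w hw => by rw [min_eq_left hw]) (by rw [min_self])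
    have hright : HasDerivWithinAt (fun w => potential s (min w 1)) 0 (Ici 1) 1 :=
      (hasDerivWithinAt_const 1 _ (potential s 1)).congr (fun w hw => by rw [min_eq_right hw])
        (by rw [min_self])
    rw [min_self, Real.one_rpow, sub_self, ← hasDerivWithinAt_univ, ← Iic_union_Ici]
    exact hleft.union hright
  · rw [min_eq_right hgt.le, Real.one_rpow, sub_self]
    refine (hasDerivAt_const v (potential s 1)).congr_of_eventuallyEq ?_
    filter_upwards [Ioi_mem_nhds hgt] with w hw
    rw [min_eq_right (le_of_lt hw)]

lemma hasDerivAt_gauge (hs1 : s ≠ 1) {v : ℝ} (hv : 0 < v) :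
    HasDerivAt (gauge lam s) (lam * (1 - min v 1 ^ (-s)) * gauge lam s v) v := by
  refine HasDerivAt.congr_deriv (f := gauge lam s)
    ((hasDerivAt_potential_min hs1 hv).const_mul lam).exp ?_
  rw [gauge]
  ring

lemma continuous_gauge (hs1 : s < 1) : Continuous (gauge lam s) := by
  have : Continuous fun y : ℝ => y ^ (1 - s) := Real.continuous_rpow_const (by linarith)
  unfold gauge potential
  fun_prop

lemma gauge_pos {v : ℝ} : 0 < gauge lam s v := Real.exp_pos _

lemma one_le_gauge (hlam : 0 ≤ lam) (hs0 : 0 ≤ s) (hs1 : s < 1) {v : ℝ} (hv : 0 ≤ v) :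
    1 ≤ gauge lam s v :=
  Real.one_le_exp (mul_nonneg hlam (potential_nonneg hs0 hs1 (le_min hv zero_le_one)))

lemma gauge_of_one_le {v : ℝ} (hv : 1 ≤ v) : gauge lam s v = 1 := by
  simp [gauge, potential, min_eq_right hv]

lemma gauge_zero (hs1 : s < 1) : gauge lam s 0 = Real.exp (lam * (s / (1 - s))) := by
  rw [gauge, min_eq_left zero_le_one, potential, Real.zero_rpow (by linarith)]
  congr 2
  field_simp [(by linarith : (1 : ℝ) - s ≠ 0)]
  ring

lemma hasDerivAt_neg_exp_mul_gauge (hs1 : s ≠ 1) {x u : ℝ} (hxu : 0 < x + u) :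
    HasDerivAt (fun u => -Real.exp (-(lam * u)) * gauge lam s (x + u))
      (lam * Real.exp (-(lam * u)) * (min (x + u) 1 ^ (-s) * gauge lam s (x + u))) u := by
  refine (hasDerivAt_neg_exp_mul_exp.mul
    ((hasDerivAt_gauge hs1 hxu).comp_const_add x u)).congr_deriv ?_
  ring

theorem lintegral_expMeasure_rpow_neg_mul_gauge (hlam : 0 < lam) (hs1 : s < 1) {x : ℝ}
    (hx : 0 ≤ x) :
    ∫⁻ u, ENNReal.ofReal (min (x + u) 1) ^ (-s) * ENNReal.ofReal (gauge lam s (x + u))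
      ∂expMeasure lam = ENNReal.ofReal (gauge lam s x) := by
  have := continuous_gauge (lam := lam) hs1
  set K : ℝ → ℝ := fun u => -Real.exp (-(lam * u)) * gauge lam s (x + u)
  set K' : ℝ → ℝ := fun u =>
    lam * Real.exp (-(lam * u)) * (min (x + u) 1 ^ (-s) * gauge lam s (x + u))
  have hK : ∀ u ∈ Ioi (0 : ℝ), HasDerivAt K (K' u) u := fun u hu =>
    hasDerivAt_neg_exp_mul_gauge hs1.ne (by linarith [mem_Ioi.1 hu])
  have hK'_nonneg : ∀ u ∈ Ioi (0 : ℝ), 0 ≤ K' u := by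
    intro u hu
    have := Real.rpow_nonneg (le_min (by linarith [mem_Ioi.1 hu]) zero_le_one :
      0 ≤ min (x + u) 1) (-s)
    have := gauge_pos (lam := lam) (s := s) (v := x + u)
    positivity
  have hK_cont : ContinuousWithinAt K (Ici 0) 0 :=
    (by fun_prop : Continuous K).continuousWithinAt
  have hK_lim : Tendsto K atTop (𝓝 0) := by
    have : Tendsto (fun u => -Real.exp (-(lam * u))) atTop (𝓝 0) := by
      simpa using (Real.tendsto_exp_neg_atTop_nhds_zero.comp
        (tendsto_id.const_mul_atTop hlam)).neg
    refine this.congr' ?_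
    filter_upwards [eventually_ge_atTop 1] with u hu
    simp only [K, gauge_of_one_le (by linarith : 1 ≤ x + u), mul_one]
  calc ∫⁻ u, ENNReal.ofReal (min (x + u) 1) ^ (-s) * ENNReal.ofReal (gauge lam s (x + u))
        ∂expMeasure lam
      = ∫⁻ u in Ioi 0, ENNReal.ofReal (K' u) := by
        rw [lintegral_expMeasure (by fun_prop)]
        refine setLIntegral_congr_fun measurableSet_Ioi fun u hu => ?_
        have hxu : 0 < min (x + u) 1 := lt_min (by linarith [mem_Ioi.1 hu]) one_pos
        rw [ENNReal.ofReal_rpow_of_pos hxu, ← ENNReal.ofReal_mul (by positivity),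
          ← ENNReal.ofReal_mul (by positivity)]
    _ = ENNReal.ofReal (∫ u in Ioi 0, K' u) :=
        (ofReal_integral_eq_lintegral_ofReal
          (integrableOn_Ioi_deriv_of_nonneg hK_cont hK hK'_nonneg hK_lim)
          ((ae_restrict_iff' measurableSet_Ioi).2 (Eventually.of_forall hK'_nonneg))).symm
    _ = ENNReal.ofReal (gauge lam s x) := by
        rw [integral_Ioi_of_hasDerivAt_of_nonneg hK_cont hK hK'_nonneg hK_lim]
        simp [K]

lemma tendsto_prod_min_partialSum {z : ℕ → ℝ} (hz : ∀ k, 0 ≤ z k) :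
    Tendsto (fun n => ∏ i ∈ Finset.range n, min (∑ k ∈ Finset.range (i + 1), z k) 1) atTop
      (𝓝 (∏' i, min (∑ k ∈ Finset.range (i + 1), z k) 1)) :=
  (Real.multipliable_of_nonneg_of_le_one
    (fun _ => le_min (Finset.sum_nonneg fun k _ => hz k) zero_le_one)
    (fun _ => min_le_right _ _)).hasProd.tendsto_prod_nat

lemma tendsto_prod_rpow_neg_min_partialSum {z : ℕ → ℝ} (hz : ∀ k, 0 ≤ z k) (s : ℝ) :
    Tendsto (fun n => ∏ i ∈ Finset.range n,
        ENNReal.ofReal (min (∑ k ∈ Finset.range (i + 1), z k) 1) ^ (-s)) atTop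
      (𝓝 (ENNReal.ofReal (∏' i, min (∑ k ∈ Finset.range (i + 1), z k) 1) ^ (-s))) := by
  refine ((ENNReal.continuous_rpow_const.tendsto _).comp ((ENNReal.continuous_ofReal.tendsto _).comp
    (tendsto_prod_min_partialSum hz))).congr fun n => ?_
  rw [Function.comp_apply, Function.comp_apply,
    ENNReal.ofReal_prod_of_nonneg fun i _ => le_min (Finset.sum_nonneg fun k _ => hz k) zero_le_one,
    ENNReal.prod_rpow_of_ne_top fun i _ => ENNReal.ofReal_ne_top]

section IID

variable {Ω : Type*} [MeasurableSpace Ω] {P : Measure Ω} {E : ℕ → Ω → ℝ}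

lemma ae_nonneg_of_map_eq_expMeasure (hE : ∀ i, Measurable (E i))
    (hlaw : ∀ i, P.map (E i) = expMeasure lam) : ∀ᵐ ω ∂P, ∀ k, 0 ≤ E k ω :=
  ae_all_iff.2 fun k =>
    ae_of_ae_map (hE k).aemeasurable (by rw [hlaw k]; exact ae_nonneg_expMeasure lam)

lemma aemeasurable_tprod_min_partialSum (hE : ∀ i, Measurable (E i))
    (hlaw : ∀ i, P.map (E i) = expMeasure lam) :
    AEMeasurable (fun ω => ∏' i, min (∑ k ∈ Finset.range (i + 1), E k ω) 1) P :=
  aemeasurable_of_tendsto_metrizable_ae'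
    (fun n => (by fun_prop : Measurable fun ω => ∏ i ∈ Finset.range n,
      min (∑ k ∈ Finset.range (i + 1), E k ω) 1).aemeasurable)
    (by filter_upwards [ae_nonneg_of_map_eq_expMeasure hE hlaw] with ω hω
        exact tendsto_prod_min_partialSum hω)

theorem lintegral_rpow_neg_tprod_min_partialSum_le (hlam : 0 < lam) (hs0 : 0 ≤ s) (hs1 : s < 1)
    (hE : ∀ i, Measurable (E i)) (hind : iIndepFun E P)
    (hlaw : ∀ i, P.map (E i) = expMeasure lam) :
    ∫⁻ ω, ENNReal.ofReal (∏' i, min (∑ k ∈ Finset.range (i + 1), E k ω) 1) ^ (-s) ∂P ≤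
      ENNReal.ofReal (Real.exp (lam * (s / (1 - s)))) := by
  have := isProbabilityMeasure_expMeasure hlam
  set f : ℕ → Ω → ℝ≥0∞ := fun n ω => ∏ i ∈ Finset.range n,
    ENNReal.ofReal (min (∑ k ∈ Finset.range (i + 1), E k ω) 1) ^ (-s)
  calc ∫⁻ ω, ENNReal.ofReal (∏' i, min (∑ k ∈ Finset.range (i + 1), E k ω) 1) ^ (-s) ∂P
      = ∫⁻ ω, liminf (fun n => f n ω) atTop ∂P := by
        refine lintegral_congr_ae ?_
        filter_upwards [ae_nonneg_of_map_eq_expMeasure hE hlaw] with ω hω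
        exact (tendsto_prod_rpow_neg_min_partialSum hω s).liminf_eq.symm
    _ ≤ liminf (fun n => ∫⁻ ω, f n ω ∂P) atTop := lintegral_liminf_le fun n => by fun_prop
    _ ≤ ENNReal.ofReal (gauge lam s 0) := by
        refine liminf_le_of_frequently_le' (Frequently.of_forall fun n => ?_)
        exact lintegral_prod_partialSum_le_of_iid (g := fun v => ENNReal.ofReal (min v 1) ^ (-s))
          hE hind hlaw (ae_nonneg_expMeasure lam) (by fun_prop)
          (fun x hx => ENNReal.one_le_ofReal.2 (one_le_gauge hlam.le hs0 hs1 hx))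
          (fun x hx => (lintegral_expMeasure_rpow_neg_mul_gauge hlam hs1 hx).le) n
    _ = ENNReal.ofReal (Real.exp (lam * (s / (1 - s)))) := by rw [gauge_zero hs1]

end IID

lemma exponent_at_optimal_s {a lam : ℝ} (ha : 0 < a) (hlam : 0 < lam) :
    lam * ((1 - √lam / √a) / (1 - (1 - √lam / √a))) - a * (1 - √lam / √a) =
      -(√a - √lam) ^ 2 := by
  have hA := Real.sq_sqrt ha.le
  have hL := Real.sq_sqrt hlam.le
  have := Real.sqrt_pos.2 ha
  have := Real.sqrt_pos.2 hlam
  rw [sub_sub_cancel]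
  field_simp
  linear_combination (√a - √lam) * √lam * hA - (√a - √lam) * √a * hL

end PartialSumProduct

open PartialSumProduct

/-- For `X = ∏_{i=1}^∞ min{∑_{k=1}^i E_k, 1}` with `E_i` i.i.d. `Exp(λ)`, for any
`t ∈ (0,1)`: `P(X ≤ t) ≤ exp(-((√(-log t) - √λ)₊)²)`. -/
theorem stmt_4
    {Ω : Type*} [MeasurableSpace Ω] (P : Measure Ω) [IsProbabilityMeasure P]
    (lam : ℝ) (hlam : 0 < lam)
    (E : ℕ → Ω → ℝ) (hEmeas : ∀ i, Measurable (E i))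
    (hEindep : iIndepFun E P)
    (hEdist : ∀ i, P.map (E i) = expMeasure lam)
    (X : Ω → ℝ)
    (hX : ∀ ω, X ω = ∏' i : ℕ, min (∑ k ∈ Finset.range (i + 1), E k ω) 1)
    (t : ℝ) (ht : t ∈ Set.Ioo (0 : ℝ) 1) :
    (P {ω | X ω ≤ t}).toReal ≤
      Real.exp (-(max (Real.sqrt (-Real.log t) - Real.sqrt lam) 0) ^ 2) := by
  obtain ⟨ht0, ht1⟩ := ht
  set a := -Real.log t
  have ha : 0 < a := neg_pos.2 (Real.log_neg ht0 ht1)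
  rcases le_or_gt √a √lam with hle | hlt
  · rw [max_eq_right (sub_nonpos.2 hle)]
    simpa using ENNReal.toReal_le_of_le_ofReal zero_le_one (by simpa using prob_le_one)
  rw [max_eq_left (sub_nonneg.2 hlt.le)]
  set s := 1 - √lam / √a
  have hs0 : 0 < s := sub_pos.2 ((div_lt_one (Real.sqrt_pos.2 ha)).2 hlt)
  have hs1 : s < 1 := sub_lt_self 1 (div_pos (Real.sqrt_pos.2 hlam) (Real.sqrt_pos.2 ha))
  have hexponent : t ^ s * Real.exp (lam * (s / (1 - s))) = Real.exp (-(√a - √lam) ^ 2) := by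
    rw [Real.rpow_def_of_pos ht0, ← Real.exp_add, ← exponent_at_optimal_s ha hlam]
    congr 1
    ring
  obtain rfl : X = fun ω => ∏' i, min (∑ k ∈ Finset.range (i + 1), E k ω) 1 := funext hX
  refine ENNReal.toReal_le_of_le_ofReal (Real.exp_nonneg _) ?_
  calc P {ω | _ ≤ t}
      ≤ ENNReal.ofReal (t ^ s) * _ := measure_le_le_ofReal_rpow_mul_lintegral
        (aemeasurable_tprod_min_partialSum hEmeas hEdist) hs0.le ht0
    _ ≤ ENNReal.ofReal (t ^ s) * ENNReal.ofReal (Real.exp (lam * (s / (1 - s)))) := by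
        gcongr
        exact lintegral_rpow_neg_tprod_min_partialSum_le hlam hs0.le hs1 hEmeas hEindep hEdist
    _ = _ := by rw [← ENNReal.ofReal_mul (by positivity), hexponent]
end

section
/- Let M_μ and M_ν be two independent Poisson random variables with means μ > 0 and ν > 0, respectively. Then P(M_μ ≥ M_ν) ≤ exp(-((√ν - √μ)_+)²), where x_+ = max{x, 0}. Equivalently, ∑_{(j,k) ∈ ℕ², j ≥ k} (e^{-μ} μ^j / j!) · (e^{-ν} ν^k / k!) ≤ exp(-((√ν - √μ)_+)²). -/
lemma expSum_aux (x : ℝ) : ∑' n : ℕ, x ^ n / (Nat.factorial n : ℝ) = Real.exp x := by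
  rw [Real.exp_eq_exp_ℝ, NormedSpace.exp_eq_tsum_div]

/-- For independent Poisson random variables `M_μ ~ Pois(μ)` and `M_ν ~ Pois(ν)`,
`P(M_μ ≥ M_ν) = ∑_{j ≥ k} pmf_μ(j) pmf_ν(k) ≤ exp(-((√ν - √μ)₊)²)`. -/
theorem stmt_6 (μ ν : ℝ) (hμ : 0 < μ) (hν : 0 < ν) :
    (∑' j : ℕ, ∑' k : ℕ,
        if k ≤ j then
          (Real.exp (-μ) * μ ^ j / (Nat.factorial j : ℝ)) *
            (Real.exp (-ν) * ν ^ k / (Nat.factorial k : ℝ))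
        else 0) ≤
      Real.exp (-(max (Real.sqrt ν - Real.sqrt μ) 0) ^ 2) := by
  have hsμ : 0 < Real.sqrt μ := Real.sqrt_pos.2 hμ
  have hsν : 0 < Real.sqrt ν := Real.sqrt_pos.2 hν
  set r : ℝ := max (Real.sqrt ν / Real.sqrt μ) 1 with hrdef
  have hr1 : 1 ≤ r := le_max_right _ _
  have hr0 : 0 < r := lt_of_lt_of_le one_pos hr1
  set pμ : ℕ → ℝ := fun j => Real.exp (-μ) * μ ^ j / (Nat.factorial j : ℝ) with hpμ
  set pν : ℕ → ℝ := fun k => Real.exp (-ν) * ν ^ k / (Nat.factorial k : ℝ) with hpν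
  have hpμ0 : ∀ j, 0 ≤ pμ j := fun j => by
    positivity
  have hpν0 : ∀ k, 0 ≤ pν k := fun k => by
    positivity
  set G : ℕ → ℝ := fun j => pμ j * r ^ j with hG
  set H : ℕ → ℝ := fun k => pν k / r ^ k with hH
  have hGeq : ∀ j, G j = Real.exp (-μ) * ((μ * r) ^ j / (Nat.factorial j : ℝ)) := by
    intro j; simp only [hG, hpμ]; rw [mul_pow]; ring
  have hHeq : ∀ k, H k = Real.exp (-ν) * ((ν / r) ^ k / (Nat.factorial k : ℝ)) := by
    intro k; simp only [hH, hpν]; rw [div_pow]; ring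
  have hGsum : Summable G := by
    apply Summable.congr ((Real.summable_pow_div_factorial (μ * r)).mul_left (Real.exp (-μ)))
    intro j; rw [hGeq j]
  have hHsum : Summable H := by
    apply Summable.congr ((Real.summable_pow_div_factorial (ν / r)).mul_left (Real.exp (-ν)))
    intro k; rw [hHeq k]
  have hG0 : ∀ j, 0 ≤ G j := fun j => mul_nonneg (hpμ0 j) (by positivity)
  have hH0 : ∀ k, 0 ≤ H k := fun k => div_nonneg (hpν0 k) (by positivity)
  set f : ℕ → ℕ → ℝ := fun j k => if k ≤ j then pμ j * pν k else 0 with hf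
  have hf0 : ∀ j k, 0 ≤ f j k := by
    intro j k; simp only [hf]
    split
    · exact mul_nonneg (hpμ0 j) (hpν0 k)
    · exact le_refl 0
  have hfle : ∀ j k, f j k ≤ G j * H k := by
    intro j k
    simp only [hf, hG, hH]
    split
    · rename_i hkj
      have h1 : (1:ℝ) ≤ r ^ j / r ^ k := by
        rw [le_div_iff₀ (by positivity), one_mul]
        exact pow_le_pow_right₀ hr1 hkj
      calc pμ j * pν k = pμ j * pν k * 1 := by ring
        _ ≤ pμ j * pν k * (r ^ j / r ^ k) := by
            exact mul_le_mul_of_nonneg_left h1 (mul_nonneg (hpμ0 j) (hpν0 k))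
        _ = pμ j * r ^ j * (pν k / r ^ k) := by ring
    · exact mul_nonneg (hG0 j) (hH0 k)
  have hfsum : ∀ j, Summable (f j) := by
    intro j
    exact Summable.of_nonneg_of_le (hf0 j) (hfle j) (hHsum.mul_left (G j))
  have hinner : ∀ j, ∑' k, f j k ≤ G j * ∑' k, H k := by
    intro j
    calc ∑' k, f j k ≤ ∑' k, G j * H k :=
          Summable.tsum_le_tsum (hfle j) (hfsum j) (hHsum.mul_left (G j))
      _ = G j * ∑' k, H k := tsum_mul_left
  have houter : Summable (fun j => ∑' k, f j k) := by
    apply Summable.of_nonneg_of_le (fun j => tsum_nonneg (hf0 j)) hinner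
    exact hGsum.mul_right _
  have key : (∑' j, ∑' k, f j k) ≤ (∑' j, G j) * ∑' k, H k := by
    calc (∑' j, ∑' k, f j k) ≤ ∑' j, G j * ∑' k, H k :=
          Summable.tsum_le_tsum hinner houter (hGsum.mul_right _)
      _ = (∑' j, G j) * ∑' k, H k := tsum_mul_right
  have hGval : (∑' j, G j) = Real.exp (μ * r - μ) := by
    have : (∑' j, G j) = Real.exp (-μ) * ∑' j, (μ * r) ^ j / (Nat.factorial j : ℝ) := by
      rw [← tsum_mul_left]; exact tsum_congr hGeq
    rw [this, expSum_aux, ← Real.exp_add]; ring_nf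
  have hHval : (∑' k, H k) = Real.exp (ν / r - ν) := by
    have : (∑' k, H k) = Real.exp (-ν) * ∑' k, (ν / r) ^ k / (Nat.factorial k : ℝ) := by
      rw [← tsum_mul_left]; exact tsum_congr hHeq
    rw [this, expSum_aux, ← Real.exp_add]; ring_nf
  have hμeq : μ = Real.sqrt μ ^ 2 := (Real.sq_sqrt hμ.le).symm
  have hνeq : ν = Real.sqrt ν ^ 2 := (Real.sq_sqrt hν.le).symm
  have hexp : μ * r - μ + (ν / r - ν) = -(max (Real.sqrt ν - Real.sqrt μ) 0) ^ 2 := by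
    rcases le_or_gt (Real.sqrt ν) (Real.sqrt μ) with hle | hlt
    · have hr : r = 1 := by
        rw [hrdef, max_eq_right]
        exact div_le_one_of_le₀ hle hsμ.le
      have hm : max (Real.sqrt ν - Real.sqrt μ) 0 = 0 :=
        max_eq_right (by linarith)
      rw [hr, hm]; ring
    · have hr : r = Real.sqrt ν / Real.sqrt μ := by
        rw [hrdef, max_eq_left]
        rw [le_div_iff₀ hsμ, one_mul]; exact hlt.le
      have hm : max (Real.sqrt ν - Real.sqrt μ) 0 = Real.sqrt ν - Real.sqrt μ :=
        max_eq_left (by linarith)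
      rw [hr, hm]
      field_simp
      nlinarith [Real.sq_sqrt hμ.le, Real.sq_sqrt hν.le, hsμ, hsν]
  calc (∑' j, ∑' k, f j k) ≤ (∑' j, G j) * ∑' k, H k := key
    _ = Real.exp (μ * r - μ + (ν / r - ν)) := by
        rw [hGval, hHval, Real.exp_add]
    _ = Real.exp (-(max (Real.sqrt ν - Real.sqrt μ) 0) ^ 2) := by rw [hexp]
end

section
/- Let λ > 0 and t ∈ (0,1), and let N ~ Pois(λ) and N* ~ Pois(-log t) be independent Poisson random variables. Then P(N > N*) ≥ t e^{-λ} ( -1/(4√(2π) log t) · ( e^{2√(-λ log t)}/2 - 1 + 2λ log t ) + λ ). Equivalently, ∑_{(j,k) ∈ ℕ², j > k} (e^{-λ} λ^j / j!) · (t (-log t)^k / k!) is bounded below by the stated quantity. -/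
-- auxiliary: factorial inequality
lemma fac_key : ∀ k : ℕ, 2 * 4 ^ k * ((k+1).factorial * k.factorial) ≤ (2*(k+1)).factorial
  | 0 => by decide
  | (k+1) => by
    have ih := fac_key k
    have h2 : (2*(k+1+1)).factorial
        = (2*(k+1)+2) * ((2*(k+1)+1) * (2*(k+1)).factorial) := by
      have h3 : 2*(k+1+1) = (2*(k+1)+1)+1 := by ring
      rw [h3, Nat.factorial_succ, Nat.factorial_succ]
    rw [h2]
    calc 2 * 4 ^ (k+1) * ((k+1+1).factorial * (k+1).factorial)
        = (4*(k+2)*(k+1)) * (2 * 4 ^ k * ((k+1).factorial * k.factorial)) := by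
          rw [Nat.factorial_succ, Nat.factorial_succ k]
          ring
      _ ≤ (4*(k+2)*(k+1)) * (2*(k+1)).factorial := Nat.mul_le_mul_left _ ih
      _ ≤ (2*(k+1)+2) * ((2*(k+1)+1) * (2*(k+1)).factorial) := by
          rw [← mul_assoc]
          exact Nat.mul_le_mul_right _ (by nlinarith)

-- scalar inequality
lemma key_scalar (s : ℝ) (hs : 0 < s) :
    (1 / Real.sqrt (2*Real.pi)) * (Real.exp (2*s)/2 - 1 - 2*s^2) + 4*s^2
      ≤ Real.exp (2*s) + (Real.exp (2*s))⁻¹ - 2 := by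
  have hpi := Real.pi_gt_d6
  have hsqrt : (5/2 : ℝ) ≤ Real.sqrt (2*Real.pi) := by
    rw [show (5/2:ℝ) = Real.sqrt ((5/2)^2) by rw [Real.sqrt_sq]; norm_num]
    apply Real.sqrt_le_sqrt; nlinarith
  have hc0 : (0:ℝ) < 1 / Real.sqrt (2*Real.pi) := by positivity
  have hcle : (1:ℝ) / Real.sqrt (2*Real.pi) ≤ 2/5 := by
    rw [div_le_div_iff₀ (by linarith) (by norm_num)]; linarith
  have hu : 0 < Real.exp s := Real.exp_pos s
  have hE : 0 < Real.exp (2*s) := Real.exp_pos _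
  have hE2 : Real.exp (2*s) = Real.exp s * Real.exp s := by
    rw [← Real.exp_add]; ring_nf
  have hsinh : 2*s ≤ Real.exp s - (Real.exp s)⁻¹ := by
    have h := Real.self_le_sinh_iff.mpr hs.le
    rw [Real.sinh_eq, Real.exp_neg] at h
    linarith
  have hcosh : 4*s^2 ≤ Real.exp (2*s) + (Real.exp (2*s))⁻¹ - 2 := by
    have hq : (Real.exp s - (Real.exp s)⁻¹)^2
        = Real.exp (2*s) + (Real.exp (2*s))⁻¹ - 2 := by
      rw [hE2]; field_simp; ring
    nlinarith [hsinh, hs]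
  by_cases hcase : Real.exp (2*s)/2 - 1 - 2*s^2 ≤ 0
  · nlinarith [mul_nonpos_of_nonneg_of_nonpos hc0.le hcase]
  · push_neg at hcase
    have h1 : (1 / Real.sqrt (2*Real.pi)) * (Real.exp (2*s)/2 - 1 - 2*s^2)
        ≤ (2/5) * (Real.exp (2*s)/2 - 1 - 2*s^2) :=
      mul_le_mul_of_nonneg_right hcle hcase.le
    have hEinv : 0 < (Real.exp (2*s))⁻¹ := by positivity
    linarith

/-- Lower bound for `P(N > N*)` with `N ~ Pois(λ)` and `N* ~ Pois(-log t)` independent,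
written as the double sum `∑_{j > k} (e^{-λ} λ^j / j!) (t (-log t)^k / k!)`. -/
theorem stmt_8 (lam t : ℝ) (hlam : 0 < lam) (ht : t ∈ Set.Ioo (0 : ℝ) 1) :
    t * Real.exp (-lam) *
        (-1 / (4 * Real.sqrt (2 * Real.pi) * Real.log t) *
            (Real.exp (2 * Real.sqrt (-lam * Real.log t)) / 2 - 1 + 2 * lam * Real.log t) +
          lam) ≤
      ∑' j : ℕ, ∑' k : ℕ,
        if k < j then
          (Real.exp (-lam) * lam ^ j / (Nat.factorial j : ℝ)) *
            (t * (-Real.log t) ^ k / (Nat.factorial k : ℝ))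
        else 0 := by
  obtain ⟨ht0, ht1⟩ := ht
  set μ : ℝ := -Real.log t with hμdef
  have hμ : 0 < μ := by
    have := Real.log_neg ht0 ht1
    rw [hμdef]; linarith
  have hlog : Real.log t = -μ := by rw [hμdef]; ring
  set s : ℝ := Real.sqrt (-lam * Real.log t) with hsdef
  have hlm : -lam * Real.log t = lam * μ := by rw [hlog]; ring
  have hs : 0 < s := Real.sqrt_pos.mpr (by rw [hlm]; positivity)
  have hs2 : s ^ 2 = lam * μ := by
    rw [hsdef, Real.sq_sqrt (by rw [hlm]; positivity), hlm]
  clear_value s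
  clear_value μ
  set a : ℕ → ℝ := fun j => Real.exp (-lam) * lam ^ j / (Nat.factorial j : ℝ) with hadef
  set b : ℕ → ℝ := fun k => t * μ ^ k / (Nat.factorial k : ℝ) with hbdef
  set F : ℕ → ℝ := fun j => ∑' k : ℕ, if k < j then a j * b k else 0 with hFdef
  have hann : ∀ j, 0 ≤ a j := fun j =>
    div_nonneg (mul_nonneg (Real.exp_pos _).le (pow_nonneg hlam.le _)) (Nat.cast_nonneg _)
  have hbnn : ∀ k, 0 ≤ b k := fun k =>
    div_nonneg (mul_nonneg ht0.le (pow_nonneg hμ.le _)) (Nat.cast_nonneg _)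
  have hasum : Summable a := by
    have h := (Real.summable_pow_div_factorial lam).mul_left (Real.exp (-lam))
    exact h.congr fun j => by rw [hadef]; simp [mul_div_assoc]
  have hbsum : Summable b := by
    have h := (Real.summable_pow_div_factorial μ).mul_left t
    exact h.congr fun k => by rw [hbdef]; simp [mul_div_assoc]
  set C : ℝ := ∑' k, b k with hCdef
  have hFval : ∀ j : ℕ, F j = ∑ k ∈ Finset.range j, a j * b k := by
    intro j
    simp only [hFdef]
    rw [tsum_eq_sum (s := Finset.range j)
      (fun k hk => if_neg (not_lt.mpr (le_of_not_gt (fun h => hk (Finset.mem_range.mpr h)))))]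
    exact Finset.sum_congr rfl fun k hk => if_pos (Finset.mem_range.mp hk)
  have hFnn : ∀ j, 0 ≤ F j := by
    intro j
    rw [hFval]
    exact Finset.sum_nonneg fun k _ => mul_nonneg (hann j) (hbnn k)
  have hFle : ∀ j, F j ≤ a j * C := by
    intro j
    rw [hFval, ← Finset.mul_sum]
    exact mul_le_mul_of_nonneg_left
      (Summable.sum_le_tsum (Finset.range j) (fun k _ => hbnn k) hbsum) (hann j)
  have hFsumm : Summable F :=
    Summable.of_nonneg_of_le hFnn hFle (hasum.mul_right C)
  have hdiag : ∀ k : ℕ, a (k + 1) * b k ≤ F (k + 1) := by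
    intro k
    rw [hFval]
    exact Finset.single_le_sum (f := fun k' => a (k + 1) * b k')
      (fun i _ => mul_nonneg (hann _) (hbnn i)) (Finset.self_mem_range_succ k)
  -- the cosh series lower bound
  set g : ℕ → ℝ := fun k =>
    Real.exp (-lam) * t / (2 * μ) * ((2 * s) ^ (2 * (k + 1)) / (Nat.factorial (2 * (k + 1)) : ℝ))
    with hgdef
  have hg : HasSum g (Real.exp (-lam) * t / (2 * μ) * (Real.cosh (2 * s) - 1)) := by
    have h0 := Real.hasSum_cosh (2 * s)
    have h1 : HasSum (fun n : ℕ => (2 * s) ^ (2 * (n + 1)) / (Nat.factorial (2 * (n + 1)) : ℝ))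
        (Real.cosh (2 * s) - 1) := by
      refine (hasSum_nat_add_iff (f := fun n : ℕ => (2 * s) ^ (2 * n) / (Nat.factorial (2 * n) : ℝ)) 1).mpr ?_
      simpa using h0
    exact h1.mul_left _
  -- pointwise: g k ≤ a (k+1) * b k
  have hgle : ∀ k : ℕ, g k ≤ a (k + 1) * b k := by
    intro k
    have hfacpos1 : (0:ℝ) < ((k+1).factorial : ℝ) := by exact_mod_cast (k+1).factorial_pos
    have hfacpos2 : (0:ℝ) < (k.factorial : ℝ) := by exact_mod_cast k.factorial_pos
    have hfacpos3 : (0:ℝ) < ((2*(k+1)).factorial : ℝ) := by exact_mod_cast (2*(k+1)).factorial_pos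
    have hfac : ((2 * 4 ^ k * ((k+1).factorial * k.factorial) : ℕ) : ℝ)
        ≤ (((2*(k+1)).factorial : ℕ) : ℝ) := by exact_mod_cast fac_key k
    push_cast at hfac
    have hq : (2 * 4 ^ k : ℝ) / ((2*(k+1)).factorial : ℝ)
        ≤ 1 / (((k+1).factorial : ℝ) * (k.factorial : ℝ)) := by
      rw [div_le_div_iff₀ hfacpos3 (by positivity)]
      linarith
    have hpow : (2 * s) ^ (2 * (k + 1)) = 4 ^ (k+1) * lam ^ (k+1) * μ ^ (k+1) := by
      rw [pow_mul, show (2*s)^2 = 4 * (lam * μ) by rw [← hs2]; ring]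
      ring
    have hgeq : g k = (Real.exp (-lam) * t * lam ^ (k+1) * μ ^ k) *
        ((2 * 4 ^ k : ℝ) / ((2*(k+1)).factorial : ℝ)) := by
      simp only [hgdef, hpow]
      field_simp
      ring
    have habeq : a (k + 1) * b k = (Real.exp (-lam) * t * lam ^ (k+1) * μ ^ k) *
        (1 / (((k+1).factorial : ℝ) * (k.factorial : ℝ))) := by
      simp only [hadef, hbdef]
      field_simp
    rw [hgeq, habeq]
    exact mul_le_mul_of_nonneg_left hq (by positivity)
  -- chain of tsum inequalities
  have hsumF1 : Summable fun k : ℕ => F (k + 1) := by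
    exact (summable_nat_add_iff 1).mpr hFsumm
  have hstep1 : (∑' k, g k) ≤ ∑' k, F (k + 1) :=
    Summable.tsum_le_tsum (fun k => (hgle k).trans (hdiag k)) hg.summable hsumF1
  have hstep2 : (∑' k, F (k + 1)) ≤ ∑' j, F j := by
    rw [Summable.tsum_eq_zero_add hFsumm]
    linarith [hFnn 0]
  -- scalar step
  have hkey := key_scalar s hs
  rw [hs2] at hkey
  have hsqpi : (0:ℝ) < Real.sqrt (2 * Real.pi) := Real.sqrt_pos.mpr (by positivity)
  have e1 : -1 / (4 * Real.sqrt (2 * Real.pi) * Real.log t) *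
      (Real.exp (2 * s) / 2 - 1 + 2 * lam * Real.log t) + lam
      = ((1 / Real.sqrt (2 * Real.pi)) * (Real.exp (2 * s) / 2 - 1 - 2 * (lam * μ))
          + 4 * (lam * μ)) / (4 * μ) := by
    rw [hlog]
    field_simp
    ring
  have e2 : Real.exp (-lam) * t / (2 * μ) * (Real.cosh (2 * s) - 1)
      = t * Real.exp (-lam) *
        ((Real.exp (2 * s) + (Real.exp (2 * s))⁻¹ - 2) / (4 * μ)) := by
    have hEpos := Real.exp_pos (2 * s)
    rw [Real.cosh_eq, Real.exp_neg (2 * s)]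
    field_simp
    ring
  have hscalar : t * Real.exp (-lam) *
      (-1 / (4 * Real.sqrt (2 * Real.pi) * Real.log t) *
        (Real.exp (2 * s) / 2 - 1 + 2 * lam * Real.log t) + lam)
      ≤ Real.exp (-lam) * t / (2 * μ) * (Real.cosh (2 * s) - 1) := by
    rw [e1, e2]
    apply mul_le_mul_of_nonneg_left _ (by positivity)
    rw [div_le_div_iff₀ (by linarith) (by linarith)]
    have := mul_le_mul_of_nonneg_right hkey hμ.le
    linarith
  calc t * Real.exp (-lam) *
      (-1 / (4 * Real.sqrt (2 * Real.pi) * Real.log t) *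
        (Real.exp (2 * s) / 2 - 1 + 2 * lam * Real.log t) + lam)
      ≤ Real.exp (-lam) * t / (2 * μ) * (Real.cosh (2 * s) - 1) := hscalar
    _ = ∑' k, g k := hg.tsum_eq.symm
    _ ≤ ∑' k, F (k + 1) := hstep1
    _ ≤ ∑' j, F j := hstep2
end

section
/- Let λ ∈ (0,2) and t ∈ (0,1), and let N ~ Pois(λ) and N* ~ Pois(-log t) be independent Poisson random variables. Then P(N > N*) ≤ (t e^{-λ}/(1 - λ/2)) · ( √(λ/(-π log t)) · e^{2√(-λ log t)} + λ ). Equivalently, ∑_{(j,k) ∈ ℕ², j > k} (e^{-λ} λ^j / j!) · (t (-log t)^k / k!) is bounded above by the stated quantity. -/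
lemma aux_fact_two_pow (k m : ℕ) :
    (k+1).factorial * 2^m ≤ (m+(k+1)).factorial := by
  induction m with
  | zero => simp
  | succ m ih =>
      have h2 : 2 ≤ m + (k+1) + 1 := by omega
      calc (k+1).factorial * 2^(m+1) = ((k+1).factorial * 2^m) * 2 := by ring
        _ ≤ (m+(k+1)).factorial * 2 := Nat.mul_le_mul_right _ ih
        _ ≤ (m+(k+1)).factorial * (m+(k+1)+1) := Nat.mul_le_mul_left _ h2
        _ = (m+1+(k+1)).factorial := by
            rw [show m+1+(k+1) = (m+(k+1))+1 by omega, Nat.factorial_succ]; ring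

lemma aux_sqrt_pi_fact (k : ℕ) :
    Real.sqrt Real.pi * ((2*k+1).factorial : ℝ)
      ≤ 2 * 4^k * (k.factorial : ℝ) * ((k+1).factorial : ℝ) := by
  induction k with
  | zero =>
      have h4 : Real.sqrt Real.pi ≤ 2 := by
        calc Real.sqrt Real.pi ≤ Real.sqrt 4 :=
              Real.sqrt_le_sqrt (by linarith [Real.pi_le_four])
          _ = 2 := by rw [show (4:ℝ) = 2^2 by norm_num, Real.sqrt_sq (by norm_num)]
      simpa [Nat.factorial] using h4
  | succ k ih =>
      have e : ((2*(k+1)+1).factorial : ℝ)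
          = (2*(k:ℝ)+3) * ((2*(k:ℝ)+2) * ((2*k+1).factorial : ℝ)) := by
        rw [show 2*(k+1)+1 = (2*k+2)+1 by ring, Nat.factorial_succ,
          show 2*k+2 = (2*k+1)+1 by ring, Nat.factorial_succ]
        push_cast; ring
      have e2 : (((k+1)+1).factorial : ℝ) = ((k:ℝ)+2) * ((k+1).factorial : ℝ) := by
        rw [Nat.factorial_succ]; push_cast; ring
      have e3 : ((k+1).factorial : ℝ) = ((k:ℝ)+1) * (k.factorial : ℝ) := by
        rw [Nat.factorial_succ]; push_cast; ring
      rw [e, e2]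
      have hnn : (0:ℝ) ≤ (2*(k:ℝ)+3) * (2*(k:ℝ)+2) := by positivity
      calc Real.sqrt Real.pi * ((2*(k:ℝ)+3) * ((2*(k:ℝ)+2) * ((2*k+1).factorial : ℝ)))
          = (2*(k:ℝ)+3) * (2*(k:ℝ)+2) * (Real.sqrt Real.pi * ((2*k+1).factorial : ℝ)) := by ring
        _ ≤ (2*(k:ℝ)+3) * (2*(k:ℝ)+2) * (2 * 4^k * (k.factorial : ℝ) * ((k+1).factorial : ℝ)) :=
            mul_le_mul_of_nonneg_left ih hnn
        _ ≤ (2*(k:ℝ)+4) * (2*(k:ℝ)+2) * (2 * 4^k * (k.factorial : ℝ) * ((k+1).factorial : ℝ)) := by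
            have hm : (0:ℝ) ≤ (2*(k:ℝ)+2) * (2 * 4^k * (k.factorial : ℝ) * ((k+1).factorial : ℝ)) := by
              positivity
            nlinarith [hm]
        _ = 2 * 4^(k+1) * ((k+1).factorial : ℝ) * (((k:ℝ)+2) * ((k+1).factorial : ℝ)) := by
            rw [pow_succ, e3]; ring

set_option maxHeartbeats 2000000 in
/-- Upper bound for `P(N > N*)` with `N ~ Pois(λ)`, `λ ∈ (0,2)`, and `N* ~ Pois(-log t)`
independent, written as the double sum `∑_{j > k} (e^{-λ} λ^j / j!) (t (-log t)^k / k!)`. -/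
theorem stmt_9 (lam t : ℝ) (hlam : lam ∈ Set.Ioo (0 : ℝ) 2) (ht : t ∈ Set.Ioo (0 : ℝ) 1) :
    (∑' j : ℕ, ∑' k : ℕ,
        if k < j then
          (Real.exp (-lam) * lam ^ j / (Nat.factorial j : ℝ)) *
            (t * (-Real.log t) ^ k / (Nat.factorial k : ℝ))
        else 0) ≤
      t * Real.exp (-lam) / (1 - lam / 2) *
        (Real.sqrt (lam / (-(Real.pi * Real.log t))) *
            Real.exp (2 * Real.sqrt (-lam * Real.log t)) +
          lam) := by
  obtain ⟨hl0, hl2⟩ := hlam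
  obtain ⟨ht0, ht1⟩ := ht
  have hμ : 0 < -Real.log t := by
    have := Real.log_neg ht0 ht1; linarith
  set μ : ℝ := -Real.log t with hμdef
  set x : ℝ := lam * μ with hxdef
  have hx : 0 < x := mul_pos hl0 hμ
  have hsx : 0 < Real.sqrt x := Real.sqrt_pos.mpr hx
  have hsπ : 0 < Real.sqrt Real.pi := Real.sqrt_pos.mpr Real.pi_pos
  have hhalf : 0 < 1 - lam / 2 := by linarith
  set a : ℕ → ℝ := fun j => Real.exp (-lam) * lam ^ j / (Nat.factorial j : ℝ) with hadef
  set b : ℕ → ℝ := fun k => t * μ ^ k / (Nat.factorial k : ℝ) with hbdef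
  have ha_nn : ∀ j, 0 ≤ a j := fun j =>
    div_nonneg (mul_nonneg (Real.exp_pos _).le (pow_nonneg hl0.le _)) (Nat.cast_nonneg _)
  have hb_nn : ∀ k, 0 ≤ b k := fun k =>
    div_nonneg (mul_nonneg ht0.le (pow_nonneg hμ.le _)) (Nat.cast_nonneg _)
  have ha_sum : Summable a := by
    have := (Real.summable_pow_div_factorial lam).mul_left (Real.exp (-lam))
    exact this.congr fun j => by rw [hadef]; simp [mul_div_assoc]
  have hb_sum : Summable b := by
    have := (Real.summable_pow_div_factorial μ).mul_left t
    exact this.congr fun k => by rw [hbdef]; simp [mul_div_assoc]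
  -- product summability
  have hab_sum : Summable (fun p : ℕ × ℕ => a p.1 * b p.2) :=
    ha_sum.mul_of_nonneg hb_sum ha_nn hb_nn
  have hF_sum : Summable (fun p : ℕ × ℕ => if p.2 < p.1 then a p.1 * b p.2 else 0) := by
    refine Summable.of_nonneg_of_le (fun p => ?_) (fun p => ?_) hab_sum
    · split
      · exact mul_nonneg (ha_nn _) (hb_nn _)
      · exact le_rfl
    · split
      · exact le_rfl
      · exact mul_nonneg (ha_nn _) (hb_nn _)
  -- swap the two sums
  have hswap : (∑' j : ℕ, ∑' k : ℕ, if k < j then a j * b k else 0)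
      = ∑' k : ℕ, ∑' j : ℕ, if k < j then a j * b k else 0 := by
    exact (Summable.tsum_comm (f := fun j k => if k < j then a j * b k else 0) hF_sum).symm
  -- per-k inner sums, summability
  have hL_sum : Summable (fun k : ℕ => ∑' j : ℕ, if k < j then a j * b k else 0) := by
    have := (hF_sum.prod_symm).prod
    exact this.congr fun k => by rfl
  -- RHS per-k series
  have hu_sum : Summable (fun k : ℕ => lam * (x ^ k / ((k.factorial : ℝ) * ((k+1).factorial : ℝ)))) := by
    refine Summable.of_nonneg_of_le (fun k => ?_) (fun k => ?_)
      (((Real.summable_pow_div_factorial x).mul_left lam))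
    · positivity
    · have h1 : (1:ℝ) ≤ ((k+1).factorial : ℝ) := by
        exact_mod_cast Nat.one_le_iff_ne_zero.mpr (Nat.factorial_ne_zero _)
      have : x ^ k / ((k.factorial : ℝ) * ((k+1).factorial : ℝ))
          ≤ x ^ k / (k.factorial : ℝ) := by
        rw [← div_div]
        exact div_le_self (by positivity) h1
      calc lam * (x ^ k / ((k.factorial : ℝ) * ((k+1).factorial : ℝ)))
          ≤ lam * (x ^ k / (k.factorial : ℝ)) := by
            exact mul_le_mul_of_nonneg_left this hl0.le
        _ = lam * (x ^ k / (k.factorial : ℝ)) := rfl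
  set K : ℝ := t * Real.exp (-lam) / (1 - lam / 2) with hKdef
  have hK : 0 ≤ K := by positivity
  -- inner tail bound
  have hinner : ∀ k : ℕ, (∑' j : ℕ, if k < j then a j * b k else 0)
      ≤ K * (lam * (x ^ k / ((k.factorial : ℝ) * ((k+1).factorial : ℝ)))) := by
    intro k
    have hS1 : Summable (fun j => if k < j then a j * b k else 0) := by
      refine Summable.of_nonneg_of_le (fun j => ?_) (fun j => ?_) (ha_sum.mul_right (b k))
      · split
        · exact mul_nonneg (ha_nn _) (hb_nn _)
        · exact le_rfl
      · split
        · exact le_rfl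
        · exact mul_nonneg (ha_nn _) (hb_nn _)
    rw [← Summable.sum_add_tsum_nat_add (k+1) hS1]
    have hzero : (∑ i ∈ Finset.range (k+1), if k < i then a i * b k else 0) = 0 := by
      refine Finset.sum_eq_zero fun i hi => ?_
      have hik : i < k + 1 := Finset.mem_range.mp hi
      rw [if_neg (by omega)]
    rw [hzero, zero_add]
    have hcongr : (∑' m : ℕ, if k < m + (k+1) then a (m + (k+1)) * b k else 0)
        = ∑' m : ℕ, a (m + (k+1)) * b k := by
      refine tsum_congr fun m => ?_
      rw [if_pos (by omega)]
    rw [hcongr]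
    have hgeo_sum : Summable (fun m : ℕ => (lam/2)^m) :=
      summable_geometric_of_lt_one (by positivity) (by linarith)
    set C : ℝ := Real.exp (-lam) * lam ^ (k+1) / ((k+1).factorial : ℝ) * b k with hCdef
    have hC : 0 ≤ C := by
      exact mul_nonneg (div_nonneg (mul_nonneg (Real.exp_pos _).le
        (pow_nonneg hl0.le _)) (Nat.cast_nonneg _)) (hb_nn k)
    have hterm : ∀ m : ℕ, a (m + (k+1)) * b k ≤ C * (lam/2)^m := by
      intro m
      have hfac : ((k+1).factorial * 2^m : ℝ) ≤ ((m+(k+1)).factorial : ℝ) := by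
        exact_mod_cast aux_fact_two_pow k m
      have h1 : C * (lam/2)^m
          = Real.exp (-lam) * lam ^ (m+(k+1)) / (((k+1).factorial : ℝ) * 2^m) * b k := by
        rw [hCdef, pow_add, div_pow]
        have h2m : (0:ℝ) < 2^m := by positivity
        have hfk : (0:ℝ) < ((k+1).factorial : ℝ) := by
          exact_mod_cast Nat.factorial_pos _
        field_simp
        ring
      rw [h1]
      have hA : a (m + (k+1)) ≤ Real.exp (-lam) * lam ^ (m+(k+1)) / (((k+1).factorial : ℝ) * 2^m) := by
        simp only [hadef]
        exact div_le_div_of_nonneg_left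
          (mul_nonneg (Real.exp_pos _).le (pow_nonneg hl0.le _)) (by positivity) hfac
      exact mul_le_mul_of_nonneg_right hA (hb_nn k)
    have hlhs_sum : Summable (fun m : ℕ => a (m + (k+1)) * b k) :=
      (summable_nat_add_iff (k+1)).mpr (ha_sum.mul_right (b k))
    have hsum_le : (∑' m : ℕ, a (m + (k+1)) * b k) ≤ ∑' m : ℕ, C * (lam/2)^m :=
      Summable.tsum_le_tsum hterm hlhs_sum (hgeo_sum.mul_left C)
    have hgeo_val : (∑' m : ℕ, C * (lam/2)^m) = C * (1 - lam/2)⁻¹ := by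
      rw [tsum_mul_left, tsum_geometric_of_lt_one (by positivity) (by linarith)]
    have hfinal : C * (1 - lam/2)⁻¹
        = K * (lam * (x ^ k / ((k.factorial : ℝ) * ((k+1).factorial : ℝ)))) := by
      rw [hCdef, hKdef, hbdef, hxdef]
      simp only []
      rw [mul_pow]
      have hfk : (0:ℝ) < ((k+1).factorial : ℝ) := by exact_mod_cast Nat.factorial_pos _
      have hfk0 : (0:ℝ) < ((k).factorial : ℝ) := by exact_mod_cast Nat.factorial_pos _
      field_simp
      ring
    calc (∑' m : ℕ, a (m + (k+1)) * b k) ≤ ∑' m : ℕ, C * (lam/2)^m := hsum_le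
      _ = C * (1 - lam/2)⁻¹ := hgeo_val
      _ = _ := hfinal
  -- the analytic bound on the Bessel-type series
  set y : ℝ := 2 * Real.sqrt x with hydef
  have hy : 0 < y := by positivity
  have hodd_sum : Summable (fun k : ℕ => y^(2*k+1) / ((2*k+1).factorial : ℝ)) := by
    refine Summable.of_nonneg_of_le (fun k => by positivity) (fun k => ?_)
      (((Real.summable_pow_div_factorial (y^2)).mul_left y))
    have e1 : y^(2*k+1) = y * (y^2)^k := by rw [pow_succ', pow_mul]
    have hfle : ((k).factorial : ℝ) ≤ ((2*k+1).factorial : ℝ) := by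
      exact_mod_cast Nat.factorial_le (by omega)
    rw [e1, mul_div_assoc]
    refine mul_le_mul_of_nonneg_left ?_ hy.le
    exact div_le_div_of_nonneg_left (by positivity)
      (by exact_mod_cast Nat.factorial_pos k) hfle
  have hterm2 : ∀ k : ℕ, lam * (x ^ k / ((k.factorial : ℝ) * ((k+1).factorial : ℝ)))
      ≤ (lam / (Real.sqrt Real.pi * Real.sqrt x)) * (y^(2*k+1) / ((2*k+1).factorial : ℝ)) := by
    intro k
    have ey : y^(2*k+1) = 2 * 4^k * x^k * Real.sqrt x := by
      have h1 : (2:ℝ)^(2*k+1) = 2 * 4^k := by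
        rw [pow_succ, pow_mul]; norm_num [mul_comm]
      have h2 : Real.sqrt x ^ (2*k+1) = x^k * Real.sqrt x := by
        rw [pow_succ, pow_mul, Real.sq_sqrt hx.le]
      rw [hydef, mul_pow, h1, h2]; ring
    have eR : (lam / (Real.sqrt Real.pi * Real.sqrt x)) * (y^(2*k+1) / ((2*k+1).factorial : ℝ))
        = lam * x^k * (2 * 4^k) / (Real.sqrt Real.pi * ((2*k+1).factorial : ℝ)) := by
      rw [ey]
      have hf : (0:ℝ) < ((2*k+1).factorial : ℝ) := by exact_mod_cast Nat.factorial_pos _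
      field_simp
    rw [eR, mul_div_assoc']
    have hf1 : (0:ℝ) < ((k).factorial : ℝ) * (((k+1)).factorial : ℝ) := by
      have h1 : (0:ℝ) < ((k).factorial : ℝ) := by exact_mod_cast Nat.factorial_pos _
      have h2 : (0:ℝ) < (((k+1)).factorial : ℝ) := by exact_mod_cast Nat.factorial_pos _
      positivity
    have hf2 : (0:ℝ) < Real.sqrt Real.pi * ((2*k+1).factorial : ℝ) := by
      have : (0:ℝ) < ((2*k+1).factorial : ℝ) := by exact_mod_cast Nat.factorial_pos _
      positivity
    rw [div_le_div_iff₀ hf1 hf2]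
    have hfac := aux_sqrt_pi_fact k
    have hxk : (0:ℝ) ≤ lam * x^k := by positivity
    nlinarith [mul_le_mul_of_nonneg_left hfac hxk]
  have hrhs_sum : Summable (fun k : ℕ =>
      (lam / (Real.sqrt Real.pi * Real.sqrt x)) * (y^(2*k+1) / ((2*k+1).factorial : ℝ))) :=
    hodd_sum.mul_left _
  have hexp : (∑' k : ℕ, y^(2*k+1) / ((2*k+1).factorial : ℝ)) ≤ Real.exp y := by
    have hexp_eq : Real.exp y = ∑' n : ℕ, y^n / (n.factorial : ℝ) := by
      rw [Real.exp_eq_exp_ℝ, NormedSpace.exp_eq_tsum_div]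
    rw [hexp_eq]
    refine Summable.tsum_le_tsum_of_inj (fun k => 2*k+1) (fun a b h => by simpa using h)
      (fun c _ => by positivity) (fun k => le_rfl) hodd_sum
      (Real.summable_pow_div_factorial y)
  have hsqrt_eq : Real.sqrt (lam / (Real.pi * μ)) = lam / (Real.sqrt Real.pi * Real.sqrt x) := by
    have h1 : lam / (Real.pi * μ) = (lam / (Real.sqrt Real.pi * Real.sqrt x))^2 := by
      rw [div_pow, mul_pow, Real.sq_sqrt Real.pi_pos.le, Real.sq_sqrt hx.le, hxdef]
      field_simp
    rw [h1, Real.sqrt_sq (by positivity)]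
  have hmain : (∑' k : ℕ, lam * (x ^ k / ((k.factorial : ℝ) * ((k+1).factorial : ℝ))))
      ≤ Real.sqrt (lam / (Real.pi * μ)) * Real.exp y := by
    calc (∑' k : ℕ, lam * (x ^ k / ((k.factorial : ℝ) * ((k+1).factorial : ℝ))))
        ≤ ∑' k : ℕ, (lam / (Real.sqrt Real.pi * Real.sqrt x)) * (y^(2*k+1) / ((2*k+1).factorial : ℝ)) :=
          Summable.tsum_le_tsum hterm2 hu_sum hrhs_sum
      _ = (lam / (Real.sqrt Real.pi * Real.sqrt x)) * ∑' k : ℕ, y^(2*k+1) / ((2*k+1).factorial : ℝ) :=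
          tsum_mul_left
      _ ≤ (lam / (Real.sqrt Real.pi * Real.sqrt x)) * Real.exp y := by
          exact mul_le_mul_of_nonneg_left hexp (by positivity)
      _ = Real.sqrt (lam / (Real.pi * μ)) * Real.exp y := by rw [hsqrt_eq]
  -- put everything together
  have egoal1 : -(Real.pi * Real.log t) = Real.pi * μ := by rw [hμdef]; ring
  have egoal2 : -lam * Real.log t = x := by rw [hxdef, hμdef]; ring
  rw [egoal1, egoal2]
  have : (∑' j : ℕ, ∑' k : ℕ, if k < j then a j * b k else 0)
      ≤ K * (Real.sqrt (lam / (Real.pi * μ)) * Real.exp (2 * Real.sqrt x) + lam) := by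
    rw [hswap]
    calc (∑' k : ℕ, ∑' j : ℕ, if k < j then a j * b k else 0)
        ≤ ∑' k : ℕ, K * (lam * (x ^ k / ((k.factorial : ℝ) * ((k+1).factorial : ℝ)))) :=
          Summable.tsum_le_tsum hinner hL_sum (hu_sum.mul_left K)
      _ = K * ∑' k : ℕ, lam * (x ^ k / ((k.factorial : ℝ) * ((k+1).factorial : ℝ))) :=
          tsum_mul_left
      _ ≤ K * (Real.sqrt (lam / (Real.pi * μ)) * Real.exp y) :=
          mul_le_mul_of_nonneg_left hmain hK
      _ ≤ K * (Real.sqrt (lam / (Real.pi * μ)) * Real.exp (2 * Real.sqrt x) + lam) := by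
          rw [hydef]
          exact mul_le_mul_of_nonneg_left (by linarith) hK
  exact this
end

section
/- For all natural numbers n ≥ 1, 2^{2n}/(√(2πn) · (2n+1)!) ≤ 1/(n! · (n+1)!) ≤ 2√2 · 2^{2n}/(√(2πn) · (2n+1)!). -/
open Stirling Filter Real Topology

private lemma sqrt_pi_le_stirlingSeq (k : ℕ) : Real.sqrt Real.pi ≤ stirlingSeq (k + 1) := by
  have h3 : Tendsto (stirlingSeq ∘ Nat.succ) atTop (𝓝 (Real.sqrt Real.pi)) :=
    tendsto_stirlingSeq_sqrt_pi.comp (tendsto_add_atTop_nat 1)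
  exact stirlingSeq'_antitone.le_of_tendsto h3 k

private lemma stirlingSeq_le_one' (k : ℕ) : stirlingSeq (k + 1) ≤ stirlingSeq 1 :=
  stirlingSeq'_antitone (Nat.zero_le k)

private lemma key_up (a b : ℝ) (hba : b ≤ a) (hapi : Real.sqrt Real.pi ≤ a) :
    b * Real.sqrt Real.pi ≤ a ^ 2 := by
  have h0 : (0 : ℝ) ≤ Real.sqrt Real.pi := Real.sqrt_nonneg _
  have ha0 : (0 : ℝ) ≤ a := le_trans h0 hapi
  nlinarith [mul_nonneg (sub_nonneg.mpr hba) h0, mul_nonneg ha0 (sub_nonneg.mpr hapi)]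

private lemma key_low (a b e1 : ℝ) (hbpi : Real.sqrt Real.pi ≤ b)
    (hsa : Real.sqrt 2 * a ≤ e1) (ha0 : 0 ≤ a) :
    2 * Real.pi * a ^ 2 ≤ e1 ^ 2 * (b * Real.sqrt Real.pi) := by
  have hs2 : Real.sqrt 2 * Real.sqrt 2 = 2 := Real.mul_self_sqrt (by norm_num)
  have hspi : Real.sqrt Real.pi * Real.sqrt Real.pi = Real.pi :=
    Real.mul_self_sqrt Real.pi_pos.le
  have hs2a : 0 ≤ Real.sqrt 2 * a := mul_nonneg (Real.sqrt_nonneg 2) ha0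
  have he10 : 0 ≤ e1 := le_trans hs2a hsa
  have h1 : 2 * a ^ 2 ≤ e1 ^ 2 := by
    nlinarith [mul_nonneg (sub_nonneg.mpr hsa) (by linarith : (0:ℝ) ≤ e1 + Real.sqrt 2 * a)]
  calc 2 * Real.pi * a ^ 2 = Real.pi * (2 * a ^ 2) := by ring
    _ ≤ Real.pi * e1 ^ 2 := mul_le_mul_of_nonneg_left h1 Real.pi_pos.le
    _ = e1 ^ 2 * (Real.sqrt Real.pi * Real.sqrt Real.pi) := by rw [hspi]; ring
    _ ≤ e1 ^ 2 * (b * Real.sqrt Real.pi) := by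
        apply mul_le_mul_of_nonneg_left _ (sq_nonneg e1)
        exact mul_le_mul_of_nonneg_right hbpi (Real.sqrt_nonneg _)

private lemma key_num (x e1 : ℝ) (hx : 1 ≤ x) (he1pos : 0 < e1) (he : e1 ≤ 2.72) :
    (x + 1) * e1 ^ 2 ≤ 2 * Real.pi * Real.sqrt 2 * (2 * x + 1) := by
  have h1 : e1 ^ 2 ≤ 7.3984 := by nlinarith
  have hpi : (3.14 : ℝ) ≤ Real.pi := by
    have := Real.pi_gt_d6; linarith
  have hs2 : (1.41 : ℝ) ≤ Real.sqrt 2 := by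
    have h := Real.sq_sqrt (by norm_num : (0:ℝ) ≤ 2)
    nlinarith [Real.sqrt_nonneg 2]
  have h2 : (8.8548 : ℝ) ≤ 2 * Real.pi * Real.sqrt 2 := by
    have := mul_le_mul hpi hs2 (by norm_num) (by linarith [Real.pi_pos])
    linarith
  have h3 : (x + 1) * e1 ^ 2 ≤ (x + 1) * 7.3984 :=
    mul_le_mul_of_nonneg_left h1 (by linarith)
  have h4 : 8.8548 * (2 * x + 1) ≤ 2 * Real.pi * Real.sqrt 2 * (2 * x + 1) :=
    mul_le_mul_of_nonneg_right h2 (by linarith)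
  nlinarith

private lemma left_combine (A B x E s2 : ℝ) (hB : 0 ≤ B)
    (hlow : 2 * Real.pi * A ≤ E * B) (hnum : (x + 1) * E ≤ 2 * Real.pi * s2 * (2 * x + 1))
    (hx : 1 ≤ x) :
    (x + 1) * A ≤ s2 * (2 * x + 1) * B := by
  have hx1 : (0:ℝ) ≤ x + 1 := by linarith
  have h1 : 2 * Real.pi * ((x + 1) * A) ≤ (x + 1) * (E * B) := by
    have := mul_le_mul_of_nonneg_left hlow hx1
    nlinarith [this]
  have h2 : (x + 1) * E * B ≤ 2 * Real.pi * s2 * (2 * x + 1) * B :=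
    mul_le_mul_of_nonneg_right hnum hB
  nlinarith [Real.pi_pos, h1, h2]

private lemma right_combine (A B x s2 : ℝ) (hBA : B ≤ A) (hA : 0 ≤ A)
    (hs2 : 0 ≤ s2) (hx : 1 ≤ x) :
    s2 * (2 * x + 1) * B ≤ 2 * s2 * (x + 1) * A := by
  have h1 : 0 ≤ s2 * (2 * x + 1) := mul_nonneg hs2 (by linarith)
  nlinarith [mul_nonneg h1 (sub_nonneg.mpr hBA), mul_nonneg hs2 hA]

set_option maxHeartbeats 1000000 in
/-- For all natural numbers `n ≥ 1`,
`2^(2n)/(√(2πn) (2n+1)!) ≤ 1/(n! (n+1)!) ≤ 2√2 · 2^(2n)/(√(2πn) (2n+1)!)`. -/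
theorem stmt_11 (n : ℕ) (hn : 1 ≤ n) :
    (2 : ℝ) ^ (2 * n) / (Real.sqrt (2 * Real.pi * n) * (Nat.factorial (2 * n + 1) : ℝ)) ≤
      1 / ((Nat.factorial n : ℝ) * (Nat.factorial (n + 1) : ℝ)) ∧
    1 / ((Nat.factorial n : ℝ) * (Nat.factorial (n + 1) : ℝ)) ≤
      2 * Real.sqrt 2 *
        ((2 : ℝ) ^ (2 * n) / (Real.sqrt (2 * Real.pi * n) * (Nat.factorial (2 * n + 1) : ℝ))) := by
  set x : ℝ := (n : ℝ) with hxdef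
  have hx : (1 : ℝ) ≤ x := by rw [hxdef]; exact_mod_cast hn
  have hxpos : (0 : ℝ) < x := by linarith
  set e1 : ℝ := Real.exp 1 with he1def
  have he1pos : (0 : ℝ) < e1 := Real.exp_pos 1
  set a : ℝ := stirlingSeq n with hadef
  set b : ℝ := stirlingSeq (2 * n) with hbdef
  -- Stirling bounds
  obtain ⟨m, rfl⟩ : ∃ m, n = m + 1 := ⟨n - 1, by omega⟩
  have hapi : Real.sqrt Real.pi ≤ a := sqrt_pi_le_stirlingSeq m
  have h2m : 2 * (m + 1) = (2 * m + 1) + 1 := by ring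
  have hbpi : Real.sqrt Real.pi ≤ b := by
    rw [hbdef, h2m]; exact sqrt_pi_le_stirlingSeq (2 * m + 1)
  have hba : b ≤ a := by
    rw [hadef, hbdef, h2m]
    exact stirlingSeq'_antitone (by omega : m ≤ 2 * m + 1)
  have ha1 : a ≤ e1 / Real.sqrt 2 := by
    rw [hadef, he1def]
    calc stirlingSeq (m + 1) ≤ stirlingSeq 1 := stirlingSeq_le_one' m
      _ = Real.exp 1 / Real.sqrt 2 := by rw [Stirling.stirlingSeq_one]
  -- factorial identities via stirlingSeq
  have hc1 : ((m + 1 : ℕ) : ℝ) = x := hxdef.symm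
  have hc2 : ((2 * (m + 1) : ℕ) : ℝ) = 2 * x := by rw [hxdef]; push_cast; ring
  have hdpos : (0 : ℝ) < Real.sqrt (2 * x) * (x / e1) ^ (m + 1) := by positivity
  have hfn : (Nat.factorial (m + 1) : ℝ)
      = a * (Real.sqrt (2 * x) * (x / e1) ^ (m + 1)) := by
    rw [hadef, stirlingSeq, hc1, ← he1def, div_mul_cancel₀ _ (ne_of_gt hdpos)]
  have hd2pos : (0 : ℝ) < Real.sqrt (2 * (2 * x)) * ((2 * x) / e1) ^ (2 * (m + 1)) := by
    positivity
  have hfn2 : (Nat.factorial (2 * (m + 1)) : ℝ)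
      = b * (Real.sqrt (2 * (2 * x)) * ((2 * x) / e1) ^ (2 * (m + 1))) := by
    rw [hbdef, stirlingSeq, hc2, ← he1def, div_mul_cancel₀ _ (ne_of_gt hd2pos)]
  clear_value x e1 a b
  -- basic sqrt facts
  have hsx : Real.sqrt x * Real.sqrt x = x := Real.mul_self_sqrt hxpos.le
  have hsxpos : (0 : ℝ) < Real.sqrt x := Real.sqrt_pos.mpr hxpos
  have hs2pos : (0 : ℝ) < Real.sqrt 2 := Real.sqrt_pos.mpr (by norm_num)
  have hspipos : (0 : ℝ) < Real.sqrt Real.pi := Real.sqrt_pos.mpr Real.pi_pos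
  have hapos : (0 : ℝ) < a := lt_of_lt_of_le hspipos hapi
  have hbpos : (0 : ℝ) < b := lt_of_lt_of_le hspipos hbpi
  -- simplify the 2n factorial expression
  have h4x : Real.sqrt (2 * (2 * x)) = 2 * Real.sqrt x := by
    rw [show 2 * (2 * x) = 2 ^ 2 * x by ring, Real.sqrt_mul (by positivity),
      Real.sqrt_sq (by norm_num)]
  have hpow : ((2 * x) / e1) ^ (2 * (m + 1)) = 4 ^ (m + 1) * (x / e1) ^ (2 * (m + 1)) := by
    rw [show (2 * x) / e1 = 2 * (x / e1) by ring, mul_pow,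
      show (4 : ℝ) ^ (m + 1) = 2 ^ (2 * (m + 1)) by rw [pow_mul]; norm_num]
  have hE1 : (Nat.factorial (2 * (m + 1)) : ℝ) * Real.sqrt Real.pi * Real.sqrt x
      = (b * Real.sqrt Real.pi) * (2 * x * 4 ^ (m + 1) * (x / e1) ^ (2 * (m + 1))) := by
    rw [hfn2, h4x, hpow]
    linear_combination (2 * b * Real.sqrt Real.pi * 4 ^ (m + 1)
      * (x / e1) ^ (2 * (m + 1))) * hsx
  have hE2 : (4 : ℝ) ^ (m + 1) * (Nat.factorial (m + 1) : ℝ) ^ 2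
      = a ^ 2 * (2 * x * 4 ^ (m + 1) * (x / e1) ^ (2 * (m + 1))) := by
    have h2x : Real.sqrt (2 * x) * Real.sqrt (2 * x) = 2 * x :=
      Real.mul_self_sqrt (by positivity)
    have hq : (x / e1) ^ (2 * (m + 1)) = (x / e1) ^ (m + 1) * (x / e1) ^ (m + 1) := by
      rw [two_mul, pow_add]
    rw [hfn, hq]
    linear_combination (4 ^ (m + 1) * a ^ 2 * (x / e1) ^ (m + 1)
      * (x / e1) ^ (m + 1)) * h2x
  have hPpos : (0 : ℝ) < 2 * x * 4 ^ (m + 1) * (x / e1) ^ (2 * (m + 1)) := by positivity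
  -- central binomial bounds
  have hB_up : (Nat.factorial (2 * (m + 1)) : ℝ) * Real.sqrt Real.pi * Real.sqrt x
      ≤ (4 : ℝ) ^ (m + 1) * (Nat.factorial (m + 1) : ℝ) ^ 2 := by
    rw [hE1, hE2]
    exact mul_le_mul_of_nonneg_right (key_up a b hba hapi) hPpos.le
  have hB_low : 2 * Real.pi * ((4 : ℝ) ^ (m + 1) * (Nat.factorial (m + 1) : ℝ) ^ 2)
      ≤ e1 ^ 2 * ((Nat.factorial (2 * (m + 1)) : ℝ) * Real.sqrt Real.pi * Real.sqrt x) := by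
    rw [hE1, hE2]
    have hsa : Real.sqrt 2 * a ≤ e1 := by
      rw [mul_comm, ← le_div_iff₀ hs2pos]; exact ha1
    have key := key_low a b e1 hbpi hsa hapos.le
    calc 2 * Real.pi * (a ^ 2 * (2 * x * 4 ^ (m + 1) * (x / e1) ^ (2 * (m + 1))))
        = (2 * Real.pi * a ^ 2) * (2 * x * 4 ^ (m + 1) * (x / e1) ^ (2 * (m + 1))) := by ring
      _ ≤ (e1 ^ 2 * (b * Real.sqrt Real.pi))
            * (2 * x * 4 ^ (m + 1) * (x / e1) ^ (2 * (m + 1))) :=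
          mul_le_mul_of_nonneg_right key hPpos.le
      _ = e1 ^ 2 * (b * Real.sqrt Real.pi
            * (2 * x * 4 ^ (m + 1) * (x / e1) ^ (2 * (m + 1)))) := by ring
  -- cast facts
  have hF1pos : (0 : ℝ) < (Nat.factorial (m + 1) : ℝ) := by positivity
  have hF2 : (Nat.factorial ((m + 1) + 1) : ℝ)
      = (x + 1) * (Nat.factorial (m + 1) : ℝ) := by
    rw [Nat.factorial_succ, hxdef]; push_cast; ring
  have hF3 : (Nat.factorial (2 * (m + 1) + 1) : ℝ)
      = (2 * x + 1) * (Nat.factorial (2 * (m + 1)) : ℝ) := by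
    rw [Nat.factorial_succ, hxdef]; push_cast; ring
  have h2pow : (2 : ℝ) ^ (2 * (m + 1)) = 4 ^ (m + 1) := by rw [pow_mul]; norm_num
  have hSsplit : Real.sqrt (2 * Real.pi * x)
      = Real.sqrt 2 * Real.sqrt Real.pi * Real.sqrt x := by
    rw [Real.sqrt_mul (by positivity), Real.sqrt_mul (by norm_num)]
  have hnum : (x + 1) * e1 ^ 2 ≤ 2 * Real.pi * Real.sqrt 2 * (2 * x + 1) := by
    apply key_num x e1 hx he1pos
    rw [he1def]
    have := Real.exp_one_lt_d9
    linarith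
  have hBpos : (0 : ℝ) < (Nat.factorial (2 * (m + 1)) : ℝ)
      * Real.sqrt Real.pi * Real.sqrt x := by positivity
  constructor
  · -- left inequality
    rw [div_le_div_iff₀ (by positivity) (by positivity)]
    rw [h2pow, hF2, hF3, hSsplit]
    have hgoal := left_combine ((4 : ℝ) ^ (m + 1) * (Nat.factorial (m + 1) : ℝ) ^ 2)
      ((Nat.factorial (2 * (m + 1)) : ℝ) * Real.sqrt Real.pi * Real.sqrt x)
      x (e1 ^ 2) (Real.sqrt 2) hBpos.le hB_low hnum hx
    calc (4 : ℝ) ^ (m + 1) * ((Nat.factorial (m + 1) : ℝ)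
          * ((x + 1) * (Nat.factorial (m + 1) : ℝ)))
        = (x + 1) * ((4 : ℝ) ^ (m + 1) * (Nat.factorial (m + 1) : ℝ) ^ 2) := by ring
      _ ≤ Real.sqrt 2 * (2 * x + 1)
            * ((Nat.factorial (2 * (m + 1)) : ℝ) * Real.sqrt Real.pi * Real.sqrt x) := hgoal
      _ = 1 * (Real.sqrt 2 * Real.sqrt Real.pi * Real.sqrt x
            * ((2 * x + 1) * (Nat.factorial (2 * (m + 1)) : ℝ))) := by ring
  · -- right inequality
    rw [← mul_div_assoc]
    rw [div_le_div_iff₀ (by positivity) (by positivity)]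
    rw [h2pow, hF2, hF3, hSsplit]
    have hApos : (0 : ℝ) < (4 : ℝ) ^ (m + 1) * (Nat.factorial (m + 1) : ℝ) ^ 2 := by
      positivity
    have hgoal := right_combine ((4 : ℝ) ^ (m + 1) * (Nat.factorial (m + 1) : ℝ) ^ 2)
      ((Nat.factorial (2 * (m + 1)) : ℝ) * Real.sqrt Real.pi * Real.sqrt x)
      x (Real.sqrt 2) hB_up hApos.le hs2pos.le hx
    calc 1 * (Real.sqrt 2 * Real.sqrt Real.pi * Real.sqrt x
          * ((2 * x + 1) * (Nat.factorial (2 * (m + 1)) : ℝ)))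
        = Real.sqrt 2 * (2 * x + 1)
            * ((Nat.factorial (2 * (m + 1)) : ℝ) * Real.sqrt Real.pi * Real.sqrt x) := by ring
      _ ≤ 2 * Real.sqrt 2 * (x + 1)
            * ((4 : ℝ) ^ (m + 1) * (Nat.factorial (m + 1) : ℝ) ^ 2) := hgoal
      _ = 2 * Real.sqrt 2 * (4 : ℝ) ^ (m + 1)
            * ((Nat.factorial (m + 1) : ℝ) * ((x + 1) * (Nat.factorial (m + 1) : ℝ))) := by
          ring
end
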